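/- arXiv:1010.5348 — 5 statements merged into one kernel-verified Lean document; each statement's English description precedes it below -/
import Mathlib

section
/- Let R be a balanced block upper triangular nonnegative matrix in increasing order (conditions (1)–(3) of the increasing-order definition), with blocks Q_{kl}, leading block indices i_1 < ... < i_{J+1} and leading characters λ_j = μ_{i_j}. Define matrices W_k by W_{i_j} = I for leading blocks, and W_k = ∑_{m=i_j}^{k-1} W_m Q_{mk} (λ_j I − Q_k)^{-1} for non-leading blocks with i_j < k < i_{j+1}. Then for any row vector π with all coordinates strictly positive (of the dimension of the leading block of the cluster containing k), the vector π W_k has all coordinates strictly positive. -/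
/-!
Induction on the block index inside a cluster. On a leading block `π W_k = π`. On a non-leading
block `k`, `v := π W_k` satisfies `λ v = v Q_k + u` on block `k`, where the inflow
`u = ∑_m (π W_m) Q_{mk}` is nonnegative by induction and, by condition (2), positive at some
coordinate. If `Q_k` is the scalar zero, `v = u / λ > 0`. Otherwise `v ≥ v (Q_k / λ)^n`, and
`(Q_k / λ)^n → 0` by Gelfand's formula because `μ_k < λ`, so `v ≥ 0`; positivity then spreads
from a coordinate where `u > 0` along the edges of the strongly connected graph of `Q_k`.
-/

open Matrix Finset Filter Topology
open scoped ENNReal NNReal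

theorem tendsto_inv_pow_smul_pow_of_spectralRadius_lt {A : Type*} [NormedRing A]
    [NormedAlgebra ℂ A] [CompleteSpace A] {a : A} {r : ℝ≥0} (ha : spectralRadius ℂ a < r) :
    Tendsto (fun n : ℕ => ((r : ℂ)⁻¹) ^ n • a ^ n) atTop (𝓝 0) := by
  obtain ⟨s, hρs, hsr⟩ := ENNReal.lt_iff_exists_nnreal_btwn.mp ha
  have hsr : s < r := by exact_mod_cast hsr
  have hr : (0 : ℝ) < r := s.2.trans_lt hsr
  have hbound : ∀ᶠ n : ℕ in atTop, ‖((r : ℂ)⁻¹) ^ n • a ^ n‖ ≤ ((s : ℝ) / r) ^ n := by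
    filter_upwards [(spectrum.pow_nnnorm_pow_one_div_tendsto_nhds_spectralRadius a
      ).eventually_lt_const hρs, eventually_gt_atTop 0] with n hn hn0
    rw [one_div, ENNReal.rpow_inv_lt_iff (by positivity), ENNReal.rpow_natCast] at hn
    have hn : ‖a ^ n‖ ≤ (s : ℝ) ^ n := by exact_mod_cast hn.le
    have hnr : ‖(r : ℂ)‖ = r := by simp
    rw [norm_smul, norm_pow, norm_inv, hnr, div_pow, div_eq_inv_mul, inv_pow]
    gcongr
  exact squeeze_zero_norm' hbound
    (tendsto_pow_atTop_nhds_zero_of_lt_one (by positivity) ((div_lt_one hr).mpr hsr))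

theorem spectralRadius_lt_ofReal {A : Type*} [Ring A] [Algebra ℂ A] {a : A} {μ lam : ℝ}
    (hμ : (μ : ℂ) ∈ spectrum ℂ a) (hbound : ∀ z ∈ spectrum ℂ a, ‖z‖ ≤ μ) (hlt : μ < lam) :
    spectralRadius ℂ a < ENNReal.ofReal lam := by
  have hμ0 : 0 ≤ μ := (abs_nonneg μ).trans (by simpa using hbound _ hμ)
  refine (iSup₂_le fun z hz => ?_).trans_lt
    ((ENNReal.ofReal_lt_ofReal_iff (hμ0.trans_lt hlt)).mpr hlt)
  rw [← enorm_eq_nnnorm, ← ofReal_norm]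
  exact ENNReal.ofReal_le_ofReal (hbound z hz)

namespace Matrix

variable {S : Type*} [Fintype S]

theorem vecMul_nonneg {v : S → ℝ} {M : Matrix S S ℝ} (hv : 0 ≤ v) (hM : ∀ i j, 0 ≤ M i j) :
    0 ≤ v ᵥ* M :=
  fun j => Finset.sum_nonneg fun i _ => mul_nonneg (hv i) (hM i j)

theorem vecMul_le_vecMul {v w : S → ℝ} {M : Matrix S S ℝ} (hvw : v ≤ w) (hM : ∀ i j, 0 ≤ M i j) :
    v ᵥ* M ≤ w ᵥ* M :=
  fun j => Finset.sum_le_sum fun i _ => mul_le_mul_of_nonneg_right (hvw i) (hM i j)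

theorem mul_le_vecMul_apply {v : S → ℝ} {M : Matrix S S ℝ} (hv : 0 ≤ v) (hM : ∀ i j, 0 ≤ M i j)
    (i j : S) : v i * M i j ≤ (v ᵥ* M) j :=
  Finset.single_le_sum (f := fun l => v l * M l j) (fun l _ => mul_nonneg (hv l) (hM l j))
    (mem_univ i)

theorem pos_of_path_of_vecMul_le_smul {Q : Matrix S S ℝ} {lam : ℝ} {v : S → ℝ}
    (hQ : ∀ i j, 0 ≤ Q i j) (hv : 0 ≤ v) (hsuper : v ᵥ* Q ≤ lam • v) {i j : S}
    (p : @Quiver.Path S Q.toQuiver i j) (hi : 0 < v i) : 0 < v j := by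
  let _ := Q.toQuiver
  induction p with
  | nil => exact hi
  | @cons c d _ e ih =>
    have hd : 0 < lam * v d :=
      (mul_pos ih e.down).trans_le ((mul_le_vecMul_apply hv hQ c d).trans (hsuper d))
    exact (hv d).lt_of_ne fun h => by simp [← h] at hd

theorem vecMul_apply_eq_zero {v : S → ℝ} {M : Matrix S S ℝ} {j : S} (hM : ∀ i, M i j = 0) :
    (v ᵥ* M) j = 0 := by
  simp [vecMul, dotProduct, hM]

theorem vecMul_apply_pos {v : S → ℝ} {M : Matrix S S ℝ} (hv : 0 ≤ v) (hM : ∀ i j, 0 ≤ M i j)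
    {i j : S} (hvi : 0 < v i) (hMij : 0 < M i j) : 0 < (v ᵥ* M) j :=
  (mul_pos hvi hMij).trans_le (mul_le_vecMul_apply hv hM i j)

variable [DecidableEq S]

theorem tendsto_inv_smul_pow_of_spectralRadius_lt {Q : Matrix S S ℝ} {lam : ℝ}
    (hQ : spectralRadius ℂ (Q.map Complex.ofReal) < ENNReal.ofReal lam) :
    Tendsto (fun n : ℕ => (lam⁻¹ • Q) ^ n) atTop (𝓝 0) := by
  let _ := Matrix.linftyOpNormedRing (n := S) (α := ℂ)
  let _ := Matrix.linftyOpNormedAlgebra (R := ℂ) (n := S) (α := ℂ)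
  have : CompleteSpace (Matrix S S ℂ) := FiniteDimensional.complete ℂ _
  have hlam : 0 < lam := ENNReal.ofReal_pos.mp (hQ.trans_le' bot_le)
  have hre : Continuous fun M : Matrix S S ℂ => M.map Complex.re :=
    continuous_id.matrix_map Complex.continuous_re
  convert (hre.tendsto 0).comp (tendsto_inv_pow_smul_pow_of_spectralRadius_lt hQ) using 1
  · have hpow (n : ℕ) : Q.map Complex.ofReal ^ n = (Q ^ n).map Complex.ofReal :=
      (map_pow Complex.ofRealHom.mapMatrix Q n).symm
    ext n i j
    simp only [Function.comp_apply, hpow, Real.coe_toNNReal _ hlam.le, smul_pow, map_apply,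
      smul_apply, smul_eq_mul, ← Complex.ofReal_inv, ← Complex.ofReal_pow, ← Complex.ofReal_mul,
      Complex.ofReal_re, inv_pow]
  · simp

theorem vecMul_pow_le_of_vecMul_le {v : S → ℝ} {P : Matrix S S ℝ} (hP : ∀ i j, 0 ≤ P i j)
    (hv : v ᵥ* P ≤ v) (n : ℕ) : v ᵥ* P ^ n ≤ v := by
  induction n with
  | zero => simp
  | succ n ih =>
    rw [pow_succ, ← vecMul_vecMul]
    exact (vecMul_le_vecMul ih hP).trans hv

variable {Q : Matrix S S ℝ} {lam : ℝ} {v : S → ℝ}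

theorem nonneg_of_vecMul_le_smul (hQ : ∀ i j, 0 ≤ Q i j)
    (hρ : spectralRadius ℂ (Q.map Complex.ofReal) < ENNReal.ofReal lam)
    (hv : v ᵥ* Q ≤ lam • v) : 0 ≤ v := by
  have hlam : 0 < lam := ENNReal.ofReal_pos.mp (hρ.trans_le' bot_le)
  have hP : ∀ i j, 0 ≤ (lam⁻¹ • Q) i j := fun i j => mul_nonneg (inv_nonneg.mpr hlam.le) (hQ i j)
  have hvP : v ᵥ* (lam⁻¹ • Q) ≤ v := by
    rw [vecMul_smul]
    calc lam⁻¹ • (v ᵥ* Q) ≤ lam⁻¹ • (lam • v) := smul_le_smul_of_nonneg_left hv (by positivity)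
      _ = v := inv_smul_smul₀ hlam.ne' v
  have hlim : Tendsto (fun n : ℕ => v ᵥ* (lam⁻¹ • Q) ^ n) atTop (𝓝 (v ᵥ* 0)) :=
    (continuous_const.matrix_vecMul continuous_id).tendsto _ |>.comp
      (tendsto_inv_smul_pow_of_spectralRadius_lt hρ)
  rw [vecMul_zero] at hlim
  exact le_of_tendsto' hlim (vecMul_pow_le_of_vecMul_le hP hvP)

theorem pos_of_smul_eq_vecMul_add (hQ : Q.IsIrreducible)
    (hρ : spectralRadius ℂ (Q.map Complex.ofReal) < ENNReal.ofReal lam)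
    {u : S → ℝ} (hu : 0 ≤ u) {j : S} (hj : 0 < u j) (heq : lam • v = v ᵥ* Q + u) (i : S) :
    0 < v i := by
  have hsuper : v ᵥ* Q ≤ lam • v := heq ▸ le_add_of_nonneg_right hu
  have hv : 0 ≤ v := nonneg_of_vecMul_le_smul hQ.nonneg hρ hsuper
  have hvj : 0 < lam * v j := by
    have := congrFun heq j
    simp only [Pi.smul_apply, smul_eq_mul, Pi.add_apply] at this
    have h0 : 0 ≤ (v ᵥ* Q) j := vecMul_nonneg hv hQ.nonneg j
    linarith
  obtain ⟨p, -⟩ := hQ.connected j i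
  exact pos_of_path_of_vecMul_le_smul hQ.nonneg hv hsuper p
    ((hv j).lt_of_ne fun h => by simp [← h] at hvj)

theorem isIrreducible_of_forall_pos {A : Matrix S S ℝ} (hA : ∀ i j, 0 < A i j) :
    A.IsIrreducible :=
  IsPrimitive.isIrreducible ⟨fun i j => (hA i j).le, 1, one_pos, by simpa using hA⟩

end Matrix

section Blocks

variable {n κ : Type*}

def diagBlock (b : n → κ) (R : Matrix n n ℝ) (k : κ) : Matrix {i // b i = k} {i // b i = k} ℝ :=
  R.submatrix Subtype.val Subtype.val

theorem nonneg_of_pos_of_eq_zero {b : n → κ} {w : n → ℝ} {m : κ}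
    (hpos : ∀ i, b i = m → 0 < w i) (hzero : ∀ i, b i ≠ m → w i = 0) : 0 ≤ w := fun i => by
  by_cases hi : b i = m
  exacts [(hpos i hi).le, (hzero i hi).ge]

variable [Fintype n] [DecidableEq n] [DecidableEq κ]

def blockProj (b : n → κ) (k : κ) : Matrix n n ℝ := diagonal fun i => if b i = k then 1 else 0

variable {b : n → κ}

theorem vecMul_blockProj_apply (v : n → ℝ) (k : κ) (i : n) :
    (v ᵥ* blockProj b k) i = if b i = k then v i else 0 := by
  simp [blockProj, vecMul_diagonal]

theorem blockProj_mul_mul_blockProj_apply (R : Matrix n n ℝ) (m k : κ) (i j : n) :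
    (blockProj b m * R * blockProj b k) i j = if b i = m ∧ b j = k then R i j else 0 := by
  by_cases hi : b i = m <;> by_cases hj : b j = k <;> simp [blockProj, hi, hj]

theorem blockProj_mul_mul_blockProj_nonneg {R : Matrix n n ℝ} (hR : ∀ i j, 0 ≤ R i j)
    (m k : κ) (i j : n) : 0 ≤ (blockProj b m * R * blockProj b k) i j := by
  rw [blockProj_mul_mul_blockProj_apply]
  split_ifs
  exacts [hR i j, le_rfl]

theorem vecMul_blockProj_mul_mul_blockProj_apply (v : n → ℝ) (R : Matrix n n ℝ) {k : κ} {j : n}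
    (hj : b j = k) :
    (v ᵥ* (blockProj b k * R * blockProj b k)) j =
      ((fun p : {i // b i = k} => v p) ᵥ* diagBlock b R k) ⟨j, hj⟩ := by
  simp only [vecMul, dotProduct, blockProj_mul_mul_blockProj_apply, hj, and_true, mul_ite,
    mul_zero, diagBlock, submatrix_apply]
  rw [← Finset.sum_filter]
  exact Finset.sum_subtype _ (by simp) _

variable {R : Matrix n n ℝ} {k : κ} {lam : ℝ} {v u : n → ℝ}

theorem pos_of_block_eq_of_block_zero (hR : ∀ i j, b i = k → b j = k → R i j = 0)
    (hcard : (univ.filter fun i => b i = k).card = 1) (hlam : 0 < lam)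
    (heq : lam • v - v ᵥ* (blockProj b k * R * blockProj b k) = u) {j : n} (hj : b j = k)
    (huj : 0 < u j) {i : n} (hi : b i = k) : 0 < v i := by
  obtain rfl : i = j := Finset.card_le_one.mp hcard.le i (by simp [hi]) j (by simp [hj])
  have hzero : (v ᵥ* (blockProj b k * R * blockProj b k)) i = 0 := by
    rw [vecMul_blockProj_mul_mul_blockProj_apply v R hi]
    exact Finset.sum_eq_zero fun p _ => by simp [diagBlock, hR p i p.2 hi]
  have := congrFun heq i
  simp only [Pi.sub_apply, Pi.smul_apply, smul_eq_mul, hzero, sub_zero] at this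
  exact pos_of_mul_pos_right (this ▸ huj) hlam.le

theorem pos_of_block_eq_of_isIrreducible
    (hirr : (diagBlock b R k).IsIrreducible)
    (hρ : spectralRadius ℂ ((diagBlock b R k).map Complex.ofReal) < ENNReal.ofReal lam)
    (hu : 0 ≤ u) (heq : lam • v - v ᵥ* (blockProj b k * R * blockProj b k) = u) {j : n}
    (hj : b j = k) (huj : 0 < u j) {i : n} (hi : b i = k) : 0 < v i := by
  have heqk : lam • (fun p : {i // b i = k} => v p) =
      (fun p : {i // b i = k} => v p) ᵥ* diagBlock b R k + fun p : {i // b i = k} => u p := by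
    funext p
    have := congrFun heq p
    rw [Pi.sub_apply, vecMul_blockProj_mul_mul_blockProj_apply v R p.2] at this
    simp only [Pi.smul_apply, Pi.add_apply, smul_eq_mul] at this ⊢
    linarith
  exact Matrix.pos_of_smul_eq_vecMul_add hirr hρ (fun p => hu p) (j := ⟨j, hj⟩) huj heqk ⟨i, hi⟩

variable {F : Finset κ} {w : κ → n → ℝ}

theorem sum_vecMul_blockProj_nonneg (hR : ∀ i j, 0 ≤ R i j)
    (hw : ∀ m ∈ F, ∀ i, b i = m → 0 < w m i) (hw0 : ∀ m i, b i ≠ m → w m i = 0) (k : κ) :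
    0 ≤ ∑ m ∈ F, w m ᵥ* (blockProj b m * R * blockProj b k) :=
  Finset.sum_nonneg fun m hm => Matrix.vecMul_nonneg
    (nonneg_of_pos_of_eq_zero (hw m hm) (hw0 m)) (blockProj_mul_mul_blockProj_nonneg hR m k)

theorem sum_vecMul_blockProj_apply_pos (hR : ∀ i j, 0 ≤ R i j)
    (hw : ∀ m ∈ F, ∀ i, b i = m → 0 < w m i) (hw0 : ∀ m i, b i ≠ m → w m i = 0) {i j : n}
    (hi : b i ∈ F) (hj : b j = k) (hij : 0 < R i j) :
    0 < (∑ m ∈ F, w m ᵥ* (blockProj b m * R * blockProj b k)) j := by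
  rw [Finset.sum_apply]
  refine Finset.sum_pos' (fun m hm => Matrix.vecMul_nonneg
    (nonneg_of_pos_of_eq_zero (hw m hm) (hw0 m)) (blockProj_mul_mul_blockProj_nonneg hR m k) j)
    ⟨b i, hi, ?_⟩
  refine Matrix.vecMul_apply_pos (nonneg_of_pos_of_eq_zero (hw _ hi) (hw0 _))
    (blockProj_mul_mul_blockProj_nonneg hR _ k) (hw _ hi i rfl) ?_
  rwa [blockProj_mul_mul_blockProj_apply, if_pos ⟨rfl, hj⟩]

end Blocks

theorem cluster_eq_of_le_of_le {α β : Type*} [PartialOrder α] [Preorder β] {ι : α → β}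
    {cl : β → α} (hcl1 : ∀ k, ι (cl k) ≤ k) (hcl2 : ∀ k j, ι j ≤ k → j ≤ cl k) {m k : β}
    (hkm : ι (cl k) ≤ m) (hmk : m ≤ k) : cl m = cl k :=
  le_antisymm (hcl2 k (cl m) ((hcl1 m).trans hmk)) (hcl2 m (cl k) hkm)

/-- Blocks are indexed by `Fin (K + 1)` and `b` sends a color to its block; `μc k` is the
character of block `k`, `ι j` the leading block of cluster `j`, `cl k` the cluster of block `k`,
and `E m * R * E k` is `Q_{mk}` embedded as a `D × D` matrix. The definition of `W_k` for
non-leading `k` is encoded by the equation `W_k (λ_j I − Q_k) = ∑ W_m Q_{mk}`. -/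
theorem vecMul_W_pos_general
    (D K J : ℕ) (R : Matrix (Fin D) (Fin D) ℝ)
    (b : Fin D → Fin (K + 1))
    (hRpos : ∀ i j, 0 ≤ R i j)
    (μc : Fin (K + 1) → ℝ)
    -- each diagonal block is either zero (character 0) or irreducible with
    -- Perron-Frobenius eigenvalue `μc k`
    (hchar : ∀ k : Fin (K + 1),
      ((∀ i j, b i = k → b j = k → R i j = 0) ∧ μc k = 0) ∨
      ((∀ x y : {i // b i = k}, ∃ n : ℕ, 0 < n ∧
          0 < (((fun p q : {i // b i = k} => R p.1 q.1) :
            Matrix {i // b i = k} {i // b i = k} ℝ) ^ n) x y) ∧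
        (μc k : ℂ) ∈ spectrum ℂ
          ((Matrix.of fun p q : {i // b i = k} => R p.1 q.1).map (Complex.ofReal ·)) ∧
        ∀ z ∈ spectrum ℂ
          ((Matrix.of fun p q : {i // b i = k} => R p.1 q.1).map (Complex.ofReal ·)),
          ‖z‖ ≤ μc k))
    -- leading blocks and clusters: indices of running maxima of the characters
    (ι : Fin (J + 1) → Fin (K + 1))
    (cl : Fin (K + 1) → Fin (J + 1))
    (hcl1 : ∀ k, ι (cl k) ≤ k) (hcl2 : ∀ k j, ι j ≤ k → j ≤ cl k)
    (hrun : ∀ k, ι (cl k) ≠ k → μc k < μc (ι (cl k)))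
    -- increasing order, condition (1): non-leading zero diagonal blocks are scalar
    (hinc1 : ∀ k, ι (cl k) ≠ k → (∀ i j, b i = k → b j = k → R i j = 0) →
      (univ.filter fun i => b i = k).card = 1)
    -- increasing order, condition (2)
    (hinc2 : ∀ k, ι (cl k) ≠ k →
      ∃ i j, ι (cl k) ≤ b i ∧ b i < k ∧ b j = k ∧ R i j ≠ 0)
    -- the block-selecting matrices
    (E : Fin (K + 1) → Matrix (Fin D) (Fin D) ℝ)
    (hE : ∀ k i i', E k i i' = if i = i' ∧ b i = k then 1 else 0)
    -- the matrices `W_k`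
    (W : Fin (K + 1) → Matrix (Fin D) (Fin D) ℝ)
    (hWlead : ∀ j : Fin (J + 1), W (ι j) = E (ι j))
    (hWsupp : ∀ k i i', ¬(b i = ι (cl k) ∧ b i' = k) → W k i i' = 0)
    (hWrec : ∀ k, ι (cl k) ≠ k →
      W k * (μc (ι (cl k)) • (1 : Matrix (Fin D) (Fin D) ℝ) - E k * R * E k) =
        ∑ m ∈ univ.filter (fun m => ι (cl k) ≤ m ∧ m < k), W m * (E m * R * E k)) :
    ∀ k : Fin (K + 1), ∀ π : Fin D → ℝ,
      (∀ i, b i = ι (cl k) → 0 < π i) →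
      ∀ i', b i' = k → 0 < Matrix.vecMul π (W k) i' := by
  obtain rfl : E = blockProj b := by
    ext k i i'
    by_cases h : i = i' <;> simp [hE, blockProj, h]
  intro k
  induction k using WellFoundedLT.induction with
  | _ k ih =>
    intro π hπ i' hi'
    by_cases hlead : ι (cl k) = k
    · rw [← hlead, hWlead, vecMul_blockProj_apply, if_pos (hi'.trans hlead.symm)]
      exact hπ i' (hi'.trans hlead.symm)
    have heq : π ᵥ* (W k * _) = π ᵥ* _ := congrArg _ (hWrec k hlead)
    simp only [← vecMul_vecMul π, vecMul_sum, vecMul_sub, vecMul_smul, vecMul_one] at heq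
    have hprev : ∀ m ∈ univ.filter fun m => ι (cl k) ≤ m ∧ m < k,
        ∀ i, b i = m → 0 < (π ᵥ* W m) i := fun m hm => by
      obtain ⟨hkm, hmk⟩ := (mem_filter.mp hm).2
      exact ih m hmk π fun i hi => hπ i (cluster_eq_of_le_of_le hcl1 hcl2 hkm hmk.le ▸ hi)
    have hsupp : ∀ m i, b i ≠ m → (π ᵥ* W m) i = 0 := fun m i hi =>
      vecMul_apply_eq_zero fun l => hWsupp m l i fun h => hi h.2
    obtain ⟨i, j, hi1, hi2, hj, hij⟩ := hinc2 k hlead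
    have hu := sum_vecMul_blockProj_nonneg hRpos hprev hsupp k
    have huj := sum_vecMul_blockProj_apply_pos hRpos hprev hsupp
      (mem_filter.mpr ⟨mem_univ _, hi1, hi2⟩) hj ((hRpos i j).lt_of_ne' hij)
    rcases hchar k with ⟨hzero, hμ⟩ | ⟨hpos, hμ, hbound⟩
    · exact pos_of_block_eq_of_block_zero hzero (hinc1 k hlead hzero) (hμ ▸ hrun k hlead) heq
        hj huj hi'
    -- the `^ n` in `hchar` is the entrywise power, so `hpos` says that every entry is positive
    refine pos_of_block_eq_of_isIrreducible (isIrreducible_of_forall_pos fun x y => ?_)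
      (spectralRadius_lt_ofReal hμ hbound (hrun k hlead)) hu heq hj huj hi'
    obtain ⟨n, hn, h⟩ := hpos x y
    exact lt_of_pow_lt_pow_left₀ n (hRpos x y) (by simpa [diagBlock, zero_pow hn.ne'] using h)

/-- For a balanced nonnegative block upper triangular replacement matrix in increasing
order, with the matrices `W_k` defined recursively (`W_{i_j} = I` on leading blocks and
`W_k = ∑_{m=i_j}^{k-1} W_m Q_{mk} (λ_j I − Q_k)⁻¹` on non-leading blocks, encoded here
by the equation `W_k (λ_j I − Q_k) = ∑ W_m Q_{mk}`), right multiplication by `W_k` of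
any row vector with all coordinates strictly positive (on the leading block of the
cluster of `k`) gives a vector with all coordinates strictly positive (on block `k`).

Colors are `Fin D`, the block of a color is given by the monotone surjection `b`,
`μc k` is the character of the `k`-th diagonal block, `ι j` is the index of the leading
block of the `j`-th cluster, `cl k` is the cluster containing block `k`, and `E k` is
the diagonal `0-1` matrix selecting block `k`, so that `E m * R * E k` is the block
`Q_{mk}` embedded in a `D × D` matrix. -/
theorem vecMul_W_pos
    (D K J : ℕ) (R : Matrix (Fin D) (Fin D) ℝ)
    (b : Fin D → Fin (K + 1)) (hb : Monotone b) (hbsurj : Function.Surjective b)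
    (hRpos : ∀ i j, 0 ≤ R i j) (hRrow : ∀ i, ∑ j, R i j = 1)
    (hRblock : ∀ i j, b j < b i → R i j = 0)
    (μc : Fin (K + 1) → ℝ)
    -- each diagonal block is either zero (character 0) or irreducible with
    -- Perron-Frobenius eigenvalue `μc k`
    (hchar : ∀ k : Fin (K + 1),
      ((∀ i j, b i = k → b j = k → R i j = 0) ∧ μc k = 0) ∨
      ((∀ x y : {i // b i = k}, ∃ n : ℕ, 0 < n ∧
          0 < (((fun p q : {i // b i = k} => R p.1 q.1) :
            Matrix {i // b i = k} {i // b i = k} ℝ) ^ n) x y) ∧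
        (μc k : ℂ) ∈ spectrum ℂ
          ((Matrix.of fun p q : {i // b i = k} => R p.1 q.1).map (Complex.ofReal ·)) ∧
        ∀ z ∈ spectrum ℂ
          ((Matrix.of fun p q : {i // b i = k} => R p.1 q.1).map (Complex.ofReal ·)),
          ‖z‖ ≤ μc k))
    -- leading blocks and clusters: indices of running maxima of the characters
    (ι : Fin (J + 1) → Fin (K + 1)) (hι : StrictMono ι)
    (cl : Fin (K + 1) → Fin (J + 1))
    (hcl1 : ∀ k, ι (cl k) ≤ k) (hcl2 : ∀ k j, ι j ≤ k → j ≤ cl k)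
    (hmono : Monotone fun j => μc (ι j))
    (hrun : ∀ k, ι (cl k) ≠ k → μc k < μc (ι (cl k)))
    -- increasing order, condition (1): non-leading zero diagonal blocks are scalar
    (hinc1 : ∀ k, ι (cl k) ≠ k → (∀ i j, b i = k → b j = k → R i j = 0) →
      (univ.filter fun i => b i = k).card = 1)
    -- increasing order, condition (2)
    (hinc2 : ∀ k, ι (cl k) ≠ k →
      ∃ i j, ι (cl k) ≤ b i ∧ b i < k ∧ b j = k ∧ R i j ≠ 0)
    -- increasing order, condition (3)
    (hinc3 : ∀ j : Fin (J + 1), μc (ι j) = 0 →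
      0 < ((univ.filter fun j' : Fin (J + 1) =>
        j' < j ∧ μc (ι j') = μc (ι j)).card) →
      ∀ i', b i' = ι j → ∃ m : Fin (K + 1), (m : ℕ) + 1 = (ι j : ℕ) ∧
        ∃ i, b i = m ∧ 0 < R i i')
    -- the block-selecting matrices
    (E : Fin (K + 1) → Matrix (Fin D) (Fin D) ℝ)
    (hE : ∀ k i i', E k i i' = if i = i' ∧ b i = k then 1 else 0)
    -- the matrices `W_k`
    (W : Fin (K + 1) → Matrix (Fin D) (Fin D) ℝ)
    (hWlead : ∀ j : Fin (J + 1), W (ι j) = E (ι j))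
    (hWsupp : ∀ k i i', ¬(b i = ι (cl k) ∧ b i' = k) → W k i i' = 0)
    (hWrec : ∀ k, ι (cl k) ≠ k →
      W k * (μc (ι (cl k)) • (1 : Matrix (Fin D) (Fin D) ℝ) - E k * R * E k) =
        ∑ m ∈ univ.filter (fun m => ι (cl k) ≤ m ∧ m < k), W m * (E m * R * E k)) :
    ∀ k : Fin (K + 1), ∀ π : Fin D → ℝ,
      (∀ i, b i = ι (cl k) → 0 < π i) →
      ∀ i', b i' = k → 0 < Matrix.vecMul π (W k) i' :=
  vecMul_W_pos_general D K J R b hRpos μc hchar ι cl hcl1 hcl2 hrun hinc1 hinc2 E hE W hWlead hWsupp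
    hWrec
end

section
/- In the setting of a balanced block upper triangular nonnegative replacement matrix R in increasing order satisfying assumption (A) (whenever λ_j > 0 and κ_j > 0 one has ∑_{m=i_{j-1}}^{i_j−1} Q_{m i_j} ≠ 0), the constants w_j defined by w_j = 1 if λ_j = 0 or κ_j = 0, and otherwise w_j = (1/κ_j) π^{(i_{j-1})} (∑_{m=i_{j-1}}^{i_j−1} W_m Q_{m i_j}) ζ^{(i_j)}, are strictly positive for all j = 1, …, J+1. -/
/-!
Fix `j` with `λ_j > 0` and `κ_j > 0`. Then `λ_{j-1} = λ_j =: μ`, and one shows by induction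
along the cluster `i_{j-1} ≤ k < i_j` that every `W_k` is entrywise nonnegative and that each
column of block `k` has a positive entry in a row of block `i_{j-1}`. For a non-leading `k`,
`W_k (μ - Q_k) = ∑_{m<k} W_m Q_{mk}`, whose right-hand side is nonnegative and, by condition (2)
of the increasing order, positive in some column of block `k`. If `Q_k = 0` that block is a
single index; otherwise `Q_k` is irreducible with spectral radius `< μ`, so by Gelfand's formula
the Neumann series `(μ - Q_k)⁻¹ = ∑ μ^{-n-1} Q_k^n` converges and is entrywise positive.
Assumption (A) supplies a positive entry of some `Q_{m i_j}` with `m` in the cluster, and the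
positivity of `π^{(i_{j-1})}` and `ζ^{(i_j)}` on their blocks then gives `w_j > 0`.
-/

open Matrix Finset Filter

theorem summable_norm_pow_of_spectralRadius_lt_one {A : Type*} [NormedRing A]
    [NormedAlgebra ℂ A] [CompleteSpace A] {a : A} (h : spectralRadius ℂ a < 1) :
    Summable fun n : ℕ => ‖a ^ n‖ := by
  obtain ⟨ν, hν0, hρν, hν1⟩ := ENNReal.lt_iff_exists_real_btwn.1 h
  rw [ENNReal.ofReal_lt_one] at hν1
  have hbound : ∀ᶠ n : ℕ in atTop, ‖‖a ^ n‖‖ ≤ ν ^ n := by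
    have hgelfand := spectrum.pow_norm_pow_one_div_tendsto_nhds_spectralRadius a
    filter_upwards [hgelfand.eventually_lt_const hρν, eventually_gt_atTop 0] with n hn hn0
    rw [ENNReal.ofReal_lt_ofReal_iff_of_nonneg (by positivity), one_div,
      Real.rpow_inv_lt_iff_of_pos (norm_nonneg _) hν0 (by positivity)] at hn
    simpa using hn.le
  exact .of_norm_bounded_eventually_nat (summable_geometric_of_lt_one hν0 hν1) hbound

namespace Matrix

theorem tsum_apply {β m n R : Type*} [AddCommMonoid R] [TopologicalSpace R] [T2Space R]
    {f : β → Matrix m n R} (hf : Summable f) (i : m) (j : n) :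
    (∑' x, f x) i j = ∑' x, f x i j :=
  (congrFun (_root_.tsum_apply hf) j).trans (_root_.tsum_apply (Pi.summable.1 hf i))

variable {ι : Type*} [Fintype ι] [DecidableEq ι]

theorem summable_pow_of_forall_norm_mem_spectrum_le (X : Matrix ι ι ℝ) {ρ : ℝ}
    (hspec : ∀ z ∈ spectrum ℂ (X.map (Complex.ofReal ·)), ‖z‖ ≤ ρ) (hρ : ρ < 1) :
    Summable (X ^ ·) := by
  let _ : NormedRing (Matrix ι ι ℂ) := Matrix.linftyOpNormedRing
  let _ : NormedAlgebra ℂ (Matrix ι ι ℂ) := Matrix.linftyOpNormedAlgebra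
  have hrad : spectralRadius ℂ (X.map (Complex.ofReal ·)) < 1 := by
    refine lt_of_le_of_lt (iSup₂_le fun z hz => ?_) (ENNReal.ofReal_lt_one.2 (max_lt hρ one_pos))
    rw [← ENNReal.ofReal_coe_nnreal, coe_nnnorm]
    exact ENNReal.ofReal_le_ofReal ((hspec z hz).trans (le_max_left ρ 0))
  refine Pi.summable.2 fun p => Pi.summable.2 fun q => ?_
  refine .of_norm_bounded (summable_norm_pow_of_spectralRadius_lt_one hrad) fun n => ?_
  have hpow : (X.map (Complex.ofReal ·)) ^ n = (X ^ n).map (Complex.ofReal ·) :=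
    (map_pow (Complex.ofRealHom.mapMatrix : Matrix ι ι ℝ →+* _) X n).symm
  rw [hpow, ← Complex.norm_real]
  -- the `L∞`-operator norm is the largest `ℓ¹`-norm of a row
  exact (PiLp.norm_apply_le (WithLp.toLp 1 ((X ^ n).map (Complex.ofReal ·) p)) q).trans
    (norm_le_pi_norm (fun i => WithLp.toLp 1 ((X ^ n).map (Complex.ofReal ·) i)) p)

theorem isIrreducible_of_forall_pos_s11 {Q : Matrix ι ι ℝ} (h : ∀ i j, 0 < Q i j) : Q.IsIrreducible :=
  IsPrimitive.isIrreducible ⟨fun i j => (h i j).le, 1, one_pos, by simpa using h⟩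

theorem IsIrreducible.exists_pos_left_inverse_smul_one_sub {Q : Matrix ι ι ℝ}
    (hQ : Q.IsIrreducible) {ρ μ : ℝ}
    (hspec : ∀ z ∈ spectrum ℂ (Q.map (Complex.ofReal ·)), ‖z‖ ≤ ρ) (hρμ : ρ < μ) (hμ : 0 < μ) :
    ∃ N : Matrix ι ι ℝ, N * (μ • 1 - Q) = 1 ∧ ∀ p q, 0 < N p q := by
  set X := μ⁻¹ • Q
  have hXspec : ∀ z ∈ spectrum ℂ (X.map (Complex.ofReal ·)), ‖z‖ ≤ μ⁻¹ * ρ := by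
    have hmap : X.map (Complex.ofReal ·) =
        Units.mk0 (μ⁻¹ : ℂ) (by simp [hμ.ne']) • Q.map (Complex.ofReal ·) := by
      ext p q; simp [X]
    rw [hmap, spectrum.unit_smul_eq_smul]
    rintro _ ⟨z, hz, rfl⟩
    simpa [abs_of_pos hμ] using mul_le_mul_of_nonneg_left (hspec z hz) (inv_nonneg.2 hμ.le)
  have hX : Summable (X ^ ·) :=
    summable_pow_of_forall_norm_mem_spectrum_le X hXspec (by rwa [inv_mul_lt_one₀ hμ])
  refine ⟨μ⁻¹ • ∑' n, X ^ n, ?_, fun p q => ?_⟩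
  · rw [smul_mul_assoc, ← mul_smul_comm, smul_sub, smul_smul, inv_mul_cancel₀ hμ.ne', one_smul]
    exact hX.tsum_pow_mul_one_sub
  · obtain ⟨n, -, hQn⟩ := (isIrreducible_iff_exists_pow_pos hQ.nonneg).1 hQ p q
    have hXn : 0 < (X ^ n) p q := by
      simpa [X, smul_pow] using mul_pos (pow_pos (inv_pos.2 hμ) n) hQn
    have hXnonneg : ∀ m, 0 ≤ (X ^ m) p q := fun m =>
      pow_apply_nonneg (fun p q => smul_nonneg (inv_nonneg.2 hμ.le) (hQ.nonneg p q)) m p q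
    rw [smul_apply, tsum_apply hX, smul_eq_mul]
    exact mul_pos (inv_pos.2 hμ) (hXn.trans_le
      ((Pi.summable.1 (Pi.summable.1 hX p) q).le_tsum n fun m _ => hXnonneg m))

end Matrix

theorem zero_or_irreducible_of_block_char {ι κ : Type*} [Fintype ι] [DecidableEq ι]
    [DecidableEq κ] {b : ι → κ} {R : Matrix ι ι ℝ} (hR : ∀ p q, 0 ≤ R p q) {k : κ}
    {c : ℝ}
    (h : ((∀ i j, b i = k → b j = k → R i j = 0) ∧ c = 0) ∨
      ((∀ x y : {i // b i = k}, ∃ n : ℕ, 0 < n ∧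
          0 < (((fun p q : {i // b i = k} => R p.1 q.1) :
            Matrix {i // b i = k} {i // b i = k} ℝ) ^ n) x y) ∧
        (c : ℂ) ∈ spectrum ℂ
          ((Matrix.of fun p q : {i // b i = k} => R p.1 q.1).map (Complex.ofReal ·)) ∧
        ∀ z ∈ spectrum ℂ
          ((Matrix.of fun p q : {i // b i = k} => R p.1 q.1).map (Complex.ofReal ·)),
          ‖z‖ ≤ c)) :
    (∀ i j, b i = k → b j = k → R i j = 0) ∨
      ((of fun p q : {i // b i = k} => R p q).IsIrreducible ∧
        ∀ z ∈ spectrum ℂ ((of fun p q : {i // b i = k} => R p q).map (Complex.ofReal ·)),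
          ‖z‖ ≤ c) := by
  refine h.imp And.left fun ⟨hpow, _, hspec⟩ => ⟨isIrreducible_of_forall_pos_s11 fun x y => ?_, hspec⟩
  obtain ⟨n, hn, hxy⟩ := hpow x y
  -- `^` acts here on the function type `_ → _ → ℝ`, i.e. entrywise
  rw [Pi.pow_apply, Pi.pow_apply] at hxy
  exact (hR x y).lt_of_ne fun h0 => by simp [← h0, hn.ne'] at hxy

def IsBlockSelector {ι κ : Type*} [DecidableEq ι] [DecidableEq κ] (b : ι → κ)
    (E : κ → Matrix ι ι ℝ) : Prop :=
  ∀ k i i', E k i i' = if i = i' ∧ b i = k then 1 else 0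

structure NonnegColPos {ι κ : Type*} (b : ι → κ) (l k : κ) (M : Matrix ι ι ℝ) : Prop where
  nonneg : ∀ r i, 0 ≤ M r i
  exists_pos : ∀ i, b i = k → ∃ r, b r = l ∧ 0 < M r i

theorem dotProduct_vecMul_pos {ι : Type*} [Fintype ι] {π ζ : ι → ℝ} {S : Matrix ι ι ℝ}
    (hπ : ∀ i, 0 ≤ π i) (hS : ∀ i j, 0 ≤ S i j) (hζ : ∀ j, 0 ≤ ζ j) {r i : ι}
    (hπr : 0 < π r) (hSri : 0 < S r i) (hζi : 0 < ζ i) : 0 < π ᵥ* S ⬝ᵥ ζ :=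
  sum_pos' (fun j _ => mul_nonneg (sum_nonneg fun p _ => mul_nonneg (hπ p) (hS p j)) (hζ j))
    ⟨i, mem_univ i, mul_pos (sum_pos' (fun p _ => mul_nonneg (hπ p) (hS p i))
      ⟨r, mem_univ r, mul_pos hπr hSri⟩) hζi⟩

namespace IsBlockSelector

variable {ι κ : Type*} [Fintype ι] [DecidableEq ι] [DecidableEq κ] {b : ι → κ}
  {E : κ → Matrix ι ι ℝ} {R : Matrix ι ι ℝ}

theorem mul_mul_apply (hE : IsBlockSelector b E) (m k : κ) (p q : ι) :
    (E m * R * E k) p q = if b p = m ∧ b q = k then R p q else 0 := by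
  have hdiag : ∀ k, E k = diagonal fun i => if b i = k then 1 else 0 := fun k => by
    ext i i'
    rw [hE, diagonal_apply]
    by_cases h : i = i' <;> simp [h]
  rw [hdiag, hdiag, mul_diagonal, diagonal_mul]
  split_ifs <;> simp_all

theorem mul_mul_apply_nonneg (hE : IsBlockSelector b E) (hR : ∀ p q, 0 ≤ R p q)
    (m k : κ) (p q : ι) : 0 ≤ (E m * R * E k) p q := by
  rw [hE.mul_mul_apply]
  split_ifs
  exacts [hR p q, le_rfl]

theorem sum_mul_apply_nonneg (hE : IsBlockSelector b E) (hR : ∀ p q, 0 ≤ R p q)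
    {W : κ → Matrix ι ι ℝ} {s : Finset κ} (hW : ∀ m ∈ s, ∀ r i, 0 ≤ W m r i)
    (k : κ) (r q : ι) : 0 ≤ (∑ m ∈ s, W m * (E m * R * E k)) r q := by
  rw [Matrix.sum_apply]
  exact sum_nonneg fun m hm => sum_nonneg fun p _ =>
    mul_nonneg (hW m hm r p) (hE.mul_mul_apply_nonneg hR m k p q)

theorem exists_pos_sum_mul_apply (hE : IsBlockSelector b E) (hR : ∀ p q, 0 ≤ R p q)
    {W : κ → Matrix ι ι ℝ} {s : Finset κ} {l k : κ}
    (hW : ∀ m ∈ s, NonnegColPos b l m (W m)) {i i' : ι} (hi : b i ∈ s) (hi' : b i' = k)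
    (hRii : 0 < R i i') :
    ∃ r, b r = l ∧ 0 < (∑ m ∈ s, W m * (E m * R * E k)) r i' := by
  obtain ⟨r, hr, hWri⟩ := (hW (b i) hi).exists_pos i rfl
  refine ⟨r, hr, ?_⟩
  have hterm : 0 < (W (b i) * (E (b i) * R * E k)) r i' := by
    rw [mul_apply]
    refine sum_pos' (fun p _ => mul_nonneg ((hW (b i) hi).nonneg r p)
      (hE.mul_mul_apply_nonneg hR _ k p i')) ⟨i, mem_univ i, ?_⟩
    rw [hE.mul_mul_apply, if_pos ⟨rfl, hi'⟩]
    exact mul_pos hWri hRii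
  rw [Matrix.sum_apply]
  exact sum_pos' (fun m hm => sum_nonneg fun p _ => mul_nonneg ((hW m hm).nonneg r p)
    (hE.mul_mul_apply_nonneg hR m k p i')) ⟨b i, hi, hterm⟩

theorem dotProduct_vecMul_sum_mul_pos (hE : IsBlockSelector b E) (hR : ∀ p q, 0 ≤ R p q)
    {W : κ → Matrix ι ι ℝ} {s : Finset κ} {l k : κ}
    (hW : ∀ m ∈ s, NonnegColPos b l m (W m)) {i i' : ι} (hi : b i ∈ s) (hi' : b i' = k)
    (hRii : R i i' ≠ 0) {π ζ : ι → ℝ} (hπ0 : ∀ r, b r ≠ l → π r = 0)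
    (hπ : ∀ r, b r = l → 0 < π r) (hζ0 : ∀ q, b q ≠ k → ζ q = 0)
    (hζ : ∀ q, b q = k → 0 < ζ q) :
    0 < π ᵥ* (∑ m ∈ s, W m * (E m * R * E k)) ⬝ᵥ ζ := by
  obtain ⟨r, hr, hSr⟩ := hE.exists_pos_sum_mul_apply hR hW hi hi' ((hR i i').lt_of_ne' hRii)
  exact dotProduct_vecMul_pos
    (fun r => (em (b r = l)).elim (fun h => (hπ r h).le) fun h => (hπ0 r h).ge)
    (hE.sum_mul_apply_nonneg hR (fun m hm => (hW m hm).nonneg) k)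
    (fun q => (em (b q = k)).elim (fun h => (hζ q h).le) fun h => (hζ0 q h).ge)
    (hπ r hr) hSr (hζ i' hi')

theorem nonnegColPos_of_zero_block (hE : IsBlockSelector b E)
    {W S : Matrix ι ι ℝ} {l k : κ} {μ : ℝ} (hμ : 0 < μ)
    (hzero : ∀ i j, b i = k → b j = k → R i j = 0)
    (hsingle : (univ.filter fun i => b i = k).card = 1)
    (hrec : W * (μ • 1 - E k * R * E k) = S) (hS : ∀ r q, 0 ≤ S r q)
    {i₀ : ι} (hi₀ : b i₀ = k) (hpos : ∃ r, b r = l ∧ 0 < S r i₀) :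
    NonnegColPos b l k W := by
  have hblock : E k * R * E k = 0 := by
    ext p q
    rw [hE.mul_mul_apply, Matrix.zero_apply]
    split_ifs with h
    exacts [hzero p q h.1 h.2, rfl]
  have hW : W = μ⁻¹ • S := by
    rw [← hrec, hblock, sub_zero, Matrix.mul_smul, mul_one, smul_smul, inv_mul_cancel₀ hμ.ne',
      one_smul]
  obtain ⟨r, hr, hSr⟩ := hpos
  refine ⟨fun r q => ?_, fun i hi => ⟨r, hr, ?_⟩⟩
  · rw [hW, Matrix.smul_apply, smul_eq_mul]
    exact mul_nonneg (inv_nonneg.2 hμ.le) (hS r q)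
  · obtain rfl : i = i₀ := card_le_one.1 hsingle.le i (by simpa) i₀ (by simpa)
    rw [hW, Matrix.smul_apply, smul_eq_mul]
    exact mul_pos (inv_pos.2 hμ) hSr

theorem nonnegColPos_of_irreducible_block (hE : IsBlockSelector b E)
    {W S : Matrix ι ι ℝ} {l k : κ} {ρ μ : ℝ} (hμ : 0 < μ)
    (hirr : (of fun p q : {i // b i = k} => R p q).IsIrreducible)
    (hspec : ∀ z ∈ spectrum ℂ ((of fun p q : {i // b i = k} => R p q).map (Complex.ofReal ·)),
      ‖z‖ ≤ ρ) (hρμ : ρ < μ)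
    (hsupp : ∀ r i, b i ≠ k → W r i = 0)
    (hrec : W * (μ • 1 - E k * R * E k) = S) (hS : ∀ r q, 0 ≤ S r q)
    {i₀ : ι} (hi₀ : b i₀ = k) (hpos : ∃ r, b r = l ∧ 0 < S r i₀) :
    NonnegColPos b l k W := by
  obtain ⟨N, hNA, hN⟩ := hirr.exists_pos_left_inverse_smul_one_sub hspec hρμ hμ
  have hrow : ∀ r, (fun p : {i // b i = k} => W r p) =
      (fun p : {i // b i = k} => S r p) ᵥ* N := by
    intro r
    have hsolve : (fun p : {i // b i = k} => W r p) ᵥ*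
        (μ • (1 : Matrix {i // b i = k} {i // b i = k} ℝ) -
          of fun p q : {i // b i = k} => R p q) = fun p : {i // b i = k} => S r p := by
      funext q
      have hout : ∑ i : {i // ¬b i = k}, W r i * (μ • 1 - E k * R * E k) i q = 0 :=
        Fintype.sum_eq_zero _ fun i => by rw [hsupp r i i.2, zero_mul]
      rw [← hrec, mul_apply, ← Fintype.sum_subtype_add_sum_subtype (fun i => b i = k), hout,
        add_zero]
      refine sum_congr rfl fun p _ => ?_
      simp [Matrix.sub_apply, one_apply, hE.mul_mul_apply, p.2, q.2, Subtype.ext_iff]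
    rw [← hsolve, vecMul_vecMul, mul_eq_one_comm.1 hNA, vecMul_one]
  have hentry : ∀ r i (hi : b i = k), W r i = ∑ p : {i // b i = k}, S r p * N p ⟨i, hi⟩ :=
    fun r i hi => congrFun (hrow r) ⟨i, hi⟩
  obtain ⟨r, hr, hSr⟩ := hpos
  refine ⟨fun r i => ?_, fun i hi => ⟨r, hr, ?_⟩⟩
  · by_cases hi : b i = k
    · rw [hentry r i hi]
      exact sum_nonneg fun p _ => mul_nonneg (hS r p) (hN p _).le
    · rw [hsupp r i hi]
  · rw [hentry r i hi]
    exact sum_pos' (fun p _ => mul_nonneg (hS r p) (hN p _).le)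
      ⟨⟨i₀, hi₀⟩, mem_univ _, mul_pos hSr (hN _ _)⟩

theorem nonnegColPos_of_mem_cluster [LinearOrder κ] [Fintype κ] (hE : IsBlockSelector b E)
    (hR : ∀ p q, 0 ≤ R p q) {W : κ → Matrix ι ι ℝ} {lo hi : κ} {μ : ℝ} (hμ : 0 < μ)
    (c : κ → ℝ) (hlead : W lo = E lo)
    (hsupp : ∀ k, lo < k → k < hi → ∀ r i, b i ≠ k → W k r i = 0)
    (hrec : ∀ k, lo < k → k < hi → W k * (μ • 1 - E k * R * E k) =
      ∑ m ∈ univ.filter (fun m => lo ≤ m ∧ m < k), W m * (E m * R * E k))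
    (hedge : ∀ k, lo < k → k < hi → ∃ i i', lo ≤ b i ∧ b i < k ∧ b i' = k ∧ R i i' ≠ 0)
    (hdiag : ∀ k, lo < k → k < hi → (∀ i j, b i = k → b j = k → R i j = 0) ∨
      ((of fun p q : {i // b i = k} => R p q).IsIrreducible ∧
        ∀ z ∈ spectrum ℂ ((of fun p q : {i // b i = k} => R p q).map (Complex.ofReal ·)),
          ‖z‖ ≤ c k))
    (hsingle : ∀ k, lo < k → k < hi → (∀ i j, b i = k → b j = k → R i j = 0) →
      (univ.filter fun i => b i = k).card = 1)
    (hc : ∀ k, lo < k → k < hi → c k < μ) :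
    ∀ k ∈ univ.filter (fun m => lo ≤ m ∧ m < hi), NonnegColPos b lo k (W k) := by
  suffices h : ∀ k, lo ≤ k → k < hi → NonnegColPos b lo k (W k) from
    fun k hk => h k (mem_filter.1 hk).2.1 (mem_filter.1 hk).2.2
  intro k
  induction k using WellFoundedLT.induction with
  | _ k ih =>
  intro hlo hhi
  obtain rfl | hlt := hlo.eq_or_lt
  · refine ⟨fun r i => ?_, fun i hi => ⟨i, hi, ?_⟩⟩
    · rw [hlead, hE]
      split_ifs <;> norm_num
    · rw [hlead, hE, if_pos ⟨rfl, hi⟩]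
      exact one_pos
  have hW : ∀ m ∈ univ.filter (fun m => lo ≤ m ∧ m < k), NonnegColPos b lo m (W m) :=
    fun m hm => by
      obtain ⟨hm1, hm2⟩ := (mem_filter.1 hm).2
      exact ih m hm2 hm1 (hm2.trans hhi)
  obtain ⟨i, i', hi1, hi2, hi', hRii⟩ := hedge k hlt hhi
  have hpos := hE.exists_pos_sum_mul_apply hR hW (mem_filter.2 ⟨mem_univ _, hi1, hi2⟩) hi'
    ((hR i i').lt_of_ne' hRii)
  have hS := hE.sum_mul_apply_nonneg hR (fun m hm => (hW m hm).nonneg) k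
  rcases hdiag k hlt hhi with hzero | ⟨hirr, hspec⟩
  · exact hE.nonnegColPos_of_zero_block hμ hzero (hsingle k hlt hhi hzero) (hrec k hlt hhi) hS
      hi' hpos
  · exact hE.nonnegColPos_of_irreducible_block hμ hirr hspec (hc k hlt hhi) (hsupp k hlt hhi)
      (hrec k hlt hhi) hS hi' hpos

end IsBlockSelector

theorem Monotone.apply_pred_eq_of_exists_lt_apply_eq {J : ℕ} {β : Type*} [PartialOrder β]
    {f : Fin (J + 1) → β} (hf : Monotone f) {jp j : Fin (J + 1)} (hjp : (jp : ℕ) + 1 = j)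
    (h : ∃ j' < j, f j' = f j) : f jp = f j := by
  obtain ⟨j', hj', hfj'⟩ := h
  refine le_antisymm (hf (Fin.le_def.2 (by omega))) (hfj' ▸ hf (Fin.le_def.2 ?_))
  rw [Fin.lt_def] at hj'
  omega

theorem cl_eq_of_le_of_lt {J : ℕ} {κ : Type*} [LinearOrder κ] {ι : Fin (J + 1) → κ}
    (hι : StrictMono ι) {cl : κ → Fin (J + 1)} (hcl1 : ∀ k, ι (cl k) ≤ k)
    (hcl2 : ∀ k j, ι j ≤ k → j ≤ cl k) {jp j : Fin (J + 1)} (hjp : (jp : ℕ) + 1 = j) {k : κ}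
    (hk1 : ι jp ≤ k) (hk2 : k < ι j) : cl k = jp := by
  refine le_antisymm (not_lt.1 fun hlt => ?_) (hcl2 k jp hk1)
  have hj : j ≤ cl k := Fin.le_def.2 (by omega)
  exact hk2.not_ge ((hι.monotone hj).trans (hcl1 k))

theorem w_pos_general
    (D K J : ℕ) (R : Matrix (Fin D) (Fin D) ℝ)
    (b : Fin D → Fin (K + 1))
    (hRpos : ∀ i j, 0 ≤ R i j)
    (μc : Fin (K + 1) → ℝ)
    -- each diagonal block is either zero (character 0) or irreducible with
    -- Perron-Frobenius eigenvalue `μc k`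
    (hchar : ∀ k : Fin (K + 1),
      ((∀ i j, b i = k → b j = k → R i j = 0) ∧ μc k = 0) ∨
      ((∀ x y : {i // b i = k}, ∃ n : ℕ, 0 < n ∧
          0 < (((fun p q : {i // b i = k} => R p.1 q.1) :
            Matrix {i // b i = k} {i // b i = k} ℝ) ^ n) x y) ∧
        (μc k : ℂ) ∈ spectrum ℂ
          ((Matrix.of fun p q : {i // b i = k} => R p.1 q.1).map (Complex.ofReal ·)) ∧
        ∀ z ∈ spectrum ℂ
          ((Matrix.of fun p q : {i // b i = k} => R p.1 q.1).map (Complex.ofReal ·)),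
          ‖z‖ ≤ μc k))
    -- leading blocks and clusters: indices of running maxima of the characters
    (ι : Fin (J + 1) → Fin (K + 1)) (hι : StrictMono ι)
    (cl : Fin (K + 1) → Fin (J + 1))
    (hcl1 : ∀ k, ι (cl k) ≤ k) (hcl2 : ∀ k j, ι j ≤ k → j ≤ cl k)
    (hmono : Monotone fun j => μc (ι j))
    (hrun : ∀ k, ι (cl k) ≠ k → μc k < μc (ι (cl k)))
    -- increasing order, condition (1): non-leading zero diagonal blocks are scalar
    (hinc1 : ∀ k, ι (cl k) ≠ k → (∀ i j, b i = k → b j = k → R i j = 0) →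
      (univ.filter fun i => b i = k).card = 1)
    -- increasing order, condition (2)
    (hinc2 : ∀ k, ι (cl k) ≠ k →
      ∃ i j, ι (cl k) ≤ b i ∧ b i < k ∧ b j = k ∧ R i j ≠ 0)
    -- the block-selecting matrices
    (E : Fin (K + 1) → Matrix (Fin D) (Fin D) ℝ)
    (hE : ∀ k i i', E k i i' = if i = i' ∧ b i = k then 1 else 0)
    -- the matrices `W_k`
    (W : Fin (K + 1) → Matrix (Fin D) (Fin D) ℝ)
    (hWlead : ∀ j : Fin (J + 1), W (ι j) = E (ι j))
    (hWsupp : ∀ k i i', ¬(b i = ι (cl k) ∧ b i' = k) → W k i i' = 0)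
    (hWrec : ∀ k, ι (cl k) ≠ k →
      W k * (μc (ι (cl k)) • (1 : Matrix (Fin D) (Fin D) ℝ) - E k * R * E k) =
        ∑ m ∈ univ.filter (fun m => ι (cl k) ≤ m ∧ m < k), W m * (E m * R * E k))
    -- assumption (A)
    (hA : ∀ j : Fin (J + 1), 0 < μc (ι j) →
      0 < ((univ.filter fun j' : Fin (J + 1) =>
        j' < j ∧ μc (ι j') = μc (ι j)).card) →
      ∃ jp : Fin (J + 1), (jp : ℕ) + 1 = (j : ℕ) ∧
        ∃ i i', ι jp ≤ b i ∧ b i < ι j ∧ b i' = ι j ∧ R i i' ≠ 0)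
    -- left Perron-Frobenius eigenvectors of the leading blocks with positive character
    (pivec : Fin (J + 1) → Fin D → ℝ)
    (hpi : ∀ j : Fin (J + 1), 0 < μc (ι j) →
      (∀ i, b i ≠ ι j → pivec j i = 0) ∧
      (∀ i, b i = ι j → 0 < pivec j i) ∧
      (∑ i, pivec j i = 1) ∧
      (∀ i', b i' = ι j →
        ∑ i ∈ univ.filter (fun i => b i = ι j), pivec j i * R i i' =
          μc (ι j) * pivec j i'))
    -- right Perron-Frobenius eigenvectors of the leading blocks with positive character
    (zvec : Fin (J + 1) → Fin D → ℝ)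
    (hz : ∀ j : Fin (J + 1), 0 < μc (ι j) →
      (∀ i, b i ≠ ι j → zvec j i = 0) ∧
      (∀ i, b i = ι j → 0 < zvec j i) ∧
      (∑ i, pivec j i * zvec j i = 1) ∧
      (∀ i, b i = ι j →
        ∑ i' ∈ univ.filter (fun i' => b i' = ι j), R i i' * zvec j i' =
          μc (ι j) * zvec j i))
    -- the constants `w_j`
    (w : Fin (J + 1) → ℝ)
    (hw1 : ∀ j : Fin (J + 1),
      (μc (ι j) = 0 ∨ (univ.filter fun j' : Fin (J + 1) =>
        j' < j ∧ μc (ι j') = μc (ι j)).card = 0) → w j = 1)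
    (hw2 : ∀ j : Fin (J + 1), 0 < μc (ι j) →
      0 < ((univ.filter fun j' : Fin (J + 1) =>
        j' < j ∧ μc (ι j') = μc (ι j)).card) →
      ∀ jp : Fin (J + 1), (jp : ℕ) + 1 = (j : ℕ) →
      w j = (((univ.filter fun j' : Fin (J + 1) =>
          j' < j ∧ μc (ι j') = μc (ι j)).card : ℝ))⁻¹ *
        dotProduct
          (Matrix.vecMul (pivec jp)
            (∑ m ∈ univ.filter (fun m => ι jp ≤ m ∧ m < ι j),
              W m * (E m * R * E (ι j))))
          (zvec j)) :
    ∀ j : Fin (J + 1), 0 < w j := by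
  intro j
  have hμnonneg : 0 ≤ μc (ι j) := by
    rcases hchar (ι j) with ⟨-, h⟩ | ⟨-, hmem, hbd⟩
    exacts [h.ge, (norm_nonneg _).trans (hbd _ hmem)]
  obtain hμ0 | hμpos := hμnonneg.eq_or_lt
  · exact hw1 j (Or.inl hμ0.symm) ▸ one_pos
  obtain hκ | hκpos := Nat.eq_zero_or_pos
    (univ.filter fun j' : Fin (J + 1) => j' < j ∧ μc (ι j') = μc (ι j)).card
  · exact hw1 j (Or.inr hκ) ▸ one_pos
  obtain ⟨jp, hjp, i, i', hi1, hi2, hi', hRii⟩ := hA j hμpos hκpos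
  obtain ⟨j', hj'⟩ := card_pos.1 hκpos
  have hμjp : μc (ι jp) = μc (ι j) :=
    hmono.apply_pred_eq_of_exists_lt_apply_eq hjp ⟨j', (mem_filter.1 hj').2⟩
  have hcl : ∀ k, ι jp < k → k < ι j → cl k = jp := fun k h1 =>
    cl_eq_of_le_of_lt hι hcl1 hcl2 hjp h1.le
  have hne : ∀ k, ι jp < k → k < ι j → ι (cl k) ≠ k := fun k h1 h2 => hcl k h1 h2 ▸ h1.ne
  have hW := IsBlockSelector.nonnegColPos_of_mem_cluster hE hRpos (hμjp ▸ hμpos) μc (hWlead jp)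
    (fun k _ _ r i hi => hWsupp k r i fun h => hi h.2)
    (fun k h1 h2 => by simpa only [hcl k h1 h2] using hWrec k (hne k h1 h2))
    (fun k h1 h2 => by simpa only [hcl k h1 h2] using hinc2 k (hne k h1 h2))
    (fun k _ _ => zero_or_irreducible_of_block_char hRpos (hchar k))
    (fun k h1 h2 => hinc1 k (hne k h1 h2))
    (fun k h1 h2 => by simpa only [hcl k h1 h2] using hrun k (hne k h1 h2))
  obtain ⟨hπ0, hπ, -, -⟩ := hpi jp (hμjp ▸ hμpos)
  obtain ⟨hζ0, hζ, -, -⟩ := hz j hμpos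
  rw [hw2 j hμpos hκpos jp hjp]
  exact mul_pos (by positivity) (IsBlockSelector.dotProduct_vecMul_sum_mul_pos hE hRpos hW
    (mem_filter.2 ⟨mem_univ _, hi1, hi2⟩) hi' hRii hπ0 hπ hζ0 hζ)

/-- For a balanced nonnegative block upper triangular replacement matrix in increasing
order satisfying assumption (A), the constants
`w_j = 1` (if `λ_j = 0` or `κ_j = 0`) and otherwise
`w_j = κ_j⁻¹ · π^{(i_{j-1})} (∑_{m=i_{j-1}}^{i_j-1} W_m Q_{m i_j}) ζ^{(i_j)}`
are strictly positive for every `j`.  Here `π^{(i_{j-1})}` is the left and `ζ^{(i_j)}`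
the right Perron–Frobenius eigenvector of the corresponding irreducible diagonal
blocks, both with positive entries, `π` normalized to sum `1` and `ζ` normalized by
`π^{(i_j)} ζ^{(i_j)} = 1`. -/
theorem w_pos
    (D K J : ℕ) (R : Matrix (Fin D) (Fin D) ℝ)
    (b : Fin D → Fin (K + 1)) (hb : Monotone b) (hbsurj : Function.Surjective b)
    (hRpos : ∀ i j, 0 ≤ R i j) (hRrow : ∀ i, ∑ j, R i j = 1)
    (hRblock : ∀ i j, b j < b i → R i j = 0)
    (μc : Fin (K + 1) → ℝ)
    -- each diagonal block is either zero (character 0) or irreducible with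
    -- Perron-Frobenius eigenvalue `μc k`
    (hchar : ∀ k : Fin (K + 1),
      ((∀ i j, b i = k → b j = k → R i j = 0) ∧ μc k = 0) ∨
      ((∀ x y : {i // b i = k}, ∃ n : ℕ, 0 < n ∧
          0 < (((fun p q : {i // b i = k} => R p.1 q.1) :
            Matrix {i // b i = k} {i // b i = k} ℝ) ^ n) x y) ∧
        (μc k : ℂ) ∈ spectrum ℂ
          ((Matrix.of fun p q : {i // b i = k} => R p.1 q.1).map (Complex.ofReal ·)) ∧
        ∀ z ∈ spectrum ℂ
          ((Matrix.of fun p q : {i // b i = k} => R p.1 q.1).map (Complex.ofReal ·)),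
          ‖z‖ ≤ μc k))
    -- leading blocks and clusters: indices of running maxima of the characters
    (ι : Fin (J + 1) → Fin (K + 1)) (hι : StrictMono ι)
    (cl : Fin (K + 1) → Fin (J + 1))
    (hcl1 : ∀ k, ι (cl k) ≤ k) (hcl2 : ∀ k j, ι j ≤ k → j ≤ cl k)
    (hmono : Monotone fun j => μc (ι j))
    (hrun : ∀ k, ι (cl k) ≠ k → μc k < μc (ι (cl k)))
    -- increasing order, condition (1): non-leading zero diagonal blocks are scalar
    (hinc1 : ∀ k, ι (cl k) ≠ k → (∀ i j, b i = k → b j = k → R i j = 0) →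
      (univ.filter fun i => b i = k).card = 1)
    -- increasing order, condition (2)
    (hinc2 : ∀ k, ι (cl k) ≠ k →
      ∃ i j, ι (cl k) ≤ b i ∧ b i < k ∧ b j = k ∧ R i j ≠ 0)
    -- increasing order, condition (3)
    (hinc3 : ∀ j : Fin (J + 1), μc (ι j) = 0 →
      0 < ((univ.filter fun j' : Fin (J + 1) =>
        j' < j ∧ μc (ι j') = μc (ι j)).card) →
      ∀ i', b i' = ι j → ∃ m : Fin (K + 1), (m : ℕ) + 1 = (ι j : ℕ) ∧
        ∃ i, b i = m ∧ 0 < R i i')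
    -- the block-selecting matrices
    (E : Fin (K + 1) → Matrix (Fin D) (Fin D) ℝ)
    (hE : ∀ k i i', E k i i' = if i = i' ∧ b i = k then 1 else 0)
    -- the matrices `W_k`
    (W : Fin (K + 1) → Matrix (Fin D) (Fin D) ℝ)
    (hWlead : ∀ j : Fin (J + 1), W (ι j) = E (ι j))
    (hWsupp : ∀ k i i', ¬(b i = ι (cl k) ∧ b i' = k) → W k i i' = 0)
    (hWrec : ∀ k, ι (cl k) ≠ k →
      W k * (μc (ι (cl k)) • (1 : Matrix (Fin D) (Fin D) ℝ) - E k * R * E k) =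
        ∑ m ∈ univ.filter (fun m => ι (cl k) ≤ m ∧ m < k), W m * (E m * R * E k))
    -- assumption (A)
    (hA : ∀ j : Fin (J + 1), 0 < μc (ι j) →
      0 < ((univ.filter fun j' : Fin (J + 1) =>
        j' < j ∧ μc (ι j') = μc (ι j)).card) →
      ∃ jp : Fin (J + 1), (jp : ℕ) + 1 = (j : ℕ) ∧
        ∃ i i', ι jp ≤ b i ∧ b i < ι j ∧ b i' = ι j ∧ R i i' ≠ 0)
    -- left Perron-Frobenius eigenvectors of the leading blocks with positive character
    (pivec : Fin (J + 1) → Fin D → ℝ)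
    (hpi : ∀ j : Fin (J + 1), 0 < μc (ι j) →
      (∀ i, b i ≠ ι j → pivec j i = 0) ∧
      (∀ i, b i = ι j → 0 < pivec j i) ∧
      (∑ i, pivec j i = 1) ∧
      (∀ i', b i' = ι j →
        ∑ i ∈ univ.filter (fun i => b i = ι j), pivec j i * R i i' =
          μc (ι j) * pivec j i'))
    -- right Perron-Frobenius eigenvectors of the leading blocks with positive character
    (zvec : Fin (J + 1) → Fin D → ℝ)
    (hz : ∀ j : Fin (J + 1), 0 < μc (ι j) →
      (∀ i, b i ≠ ι j → zvec j i = 0) ∧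
      (∀ i, b i = ι j → 0 < zvec j i) ∧
      (∑ i, pivec j i * zvec j i = 1) ∧
      (∀ i, b i = ι j →
        ∑ i' ∈ univ.filter (fun i' => b i' = ι j), R i i' * zvec j i' =
          μc (ι j) * zvec j i))
    -- the constants `w_j`
    (w : Fin (J + 1) → ℝ)
    (hw1 : ∀ j : Fin (J + 1),
      (μc (ι j) = 0 ∨ (univ.filter fun j' : Fin (J + 1) =>
        j' < j ∧ μc (ι j') = μc (ι j)).card = 0) → w j = 1)
    (hw2 : ∀ j : Fin (J + 1), 0 < μc (ι j) →
      0 < ((univ.filter fun j' : Fin (J + 1) =>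
        j' < j ∧ μc (ι j') = μc (ι j)).card) →
      ∀ jp : Fin (J + 1), (jp : ℕ) + 1 = (j : ℕ) →
      w j = (((univ.filter fun j' : Fin (J + 1) =>
          j' < j ∧ μc (ι j') = μc (ι j)).card : ℝ))⁻¹ *
        dotProduct
          (Matrix.vecMul (pivec jp)
            (∑ m ∈ univ.filter (fun m => ι jp ≤ m ∧ m < ι j),
              W m * (E m * R * E (ι j))))
          (zvec j)) :
    ∀ j : Fin (J + 1), 0 < w j :=
  w_pos_general D K J R b hRpos μc hchar ι hι cl hcl1 hcl2 hmono hrun hinc1 hinc2 E hE W hWlead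
    hWsupp hWrec hA pivec hpi zvec hz w hw1 hw2
end

section
/- In the urn model with balanced block upper triangular replacement matrix R, with ζ the right PF eigenvector of Q_k (or the scalar 1 if Q_k = 0) and μ_k the character of block k, the expectation satisfies E[C_N^{(k)} ζ] = Π_N(μ_k) ( C_0^{(k)} ζ + ∑_{m<k, Q_{mk}≠0} ∑_{n=0}^{N-1} E[C_n^{(m)} Q_{mk} ζ] / ((n+1) Π_{n+1}(μ_k)) ), where Π_N(z) = ∏_{n=0}^{N-1}(1 + z/(n+1)). -/
/-!
Write `x_N = E[C_N^{(k)} ζ]`. Given the past, `χ_{N+1}` is drawn with law `C_N / (N+1)`, so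
`x_{N+1} - x_N = E[C_N w] / (N+1)` with `w = R ζ^{(k)}`. Block triangularity makes `w` vanish on
the blocks after `k` and on the blocks with `Q_{mk} = 0`, and `w = μ_k ζ` on block `k`; hence
`x_{N+1} = (1 + μ_k/(N+1)) x_N + ∑_{m} E[C_N^{(m)} Q_{mk} ζ] / (N+1)`, and variation of constants
solves this recurrence. The factors `1 + μ_k/(n+1)` are nonzero since the Perron–Frobenius
eigenvalue `μ_k` dominates its own modulus.
-/

open Matrix Finset MeasureTheory

theorem eq_prod_mul_add_sum_div_prod_of_succ {𝕜 : Type*} [Field 𝕜] {x y a : ℕ → 𝕜}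
    (ha : ∀ n, a n ≠ 0) (hx : ∀ n, x (n + 1) = x n * a n + y n) (N : ℕ) :
    x N = (∏ n ∈ range N, a n) * (x 0 + ∑ n ∈ range N, y n / ∏ l ∈ range (n + 1), a l) := by
  induction N with
  | zero => simp
  | succ N ih =>
    have hP : ∏ l ∈ range (N + 1), a l ≠ 0 := prod_ne_zero_iff.2 fun l _ ↦ ha l
    rw [hx, ih, sum_range_succ, ← add_assoc, mul_add _ _ (y N / _), mul_div_cancel₀ _ hP,
      prod_range_succ]
    ring

section Blocks

variable {ι κ 𝕜 : Type*} [Fintype ι] [LinearOrder κ] [Fintype κ] [CommSemiring 𝕜]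
  {R : Matrix ι ι 𝕜} {b : ι → κ} {k : κ} (ζ : ι → 𝕜)

open Classical in
theorem sum_block_mul_eq_zero_of_notMem (hR : ∀ i j, b j < b i → R i j = 0) {j : ι}
    (hjk : b j ≠ k)
    (hjF : b j ∉ univ.filter (fun m => m < k ∧ ∃ i i', b i = m ∧ b i' = k ∧ R i i' ≠ 0)) :
    ∑ i' ∈ univ.filter (fun i' => b i' = k), R j i' * ζ i' = 0 := by
  refine sum_eq_zero fun i' hi' ↦ ?_
  have hbi' : b i' = k := (mem_filter.1 hi').2
  by_contra hne
  have hR0 : R j i' ≠ 0 := left_ne_zero_of_mul hne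
  have hjk' : b j < k := lt_of_le_of_ne (not_lt.1 fun h ↦ hR0 (hR j i' (hbi' ▸ h))) hjk
  exact hjF (mem_filter.2 ⟨mem_univ _, hjk', j, i', rfl, hbi', hR0⟩)

open Classical in
theorem sum_mul_sum_block_eq (hR : ∀ i j, b j < b i → R i j = 0) {ρ : 𝕜}
    (heig : ∀ j, b j = k → ∑ i' ∈ univ.filter (fun i' => b i' = k), R j i' * ζ i' = ρ * ζ j)
    (v : ι → 𝕜) :
    ∑ j, v j * ∑ i' ∈ univ.filter (fun i' => b i' = k), R j i' * ζ i' =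
      ρ * ∑ j ∈ univ.filter (fun j => b j = k), v j * ζ j +
        ∑ m ∈ univ.filter (fun m => m < k ∧ ∃ i i', b i = m ∧ b i' = k ∧ R i i' ≠ 0),
          ∑ j ∈ univ.filter (fun j => b j = m),
            v j * ∑ i' ∈ univ.filter (fun i' => b i' = k), R j i' * ζ i' := by
  set F := univ.filter (fun m => m < k ∧ ∃ i i', b i = m ∧ b i' = k ∧ R i i' ≠ 0)
  have hkF : k ∉ F := fun h ↦ lt_irrefl k (mem_filter.1 h).2.1
  rw [← sum_fiberwise univ b, ← sum_subset (subset_univ (insert k F)), sum_insert hkF, mul_sum]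
  · congr 1
    refine sum_congr rfl fun j hj ↦ ?_
    rw [heig j (mem_filter.1 hj).2]
    ring
  · intro m _ hm
    refine sum_eq_zero fun j hj ↦ ?_
    have hbj : b j = m := (mem_filter.1 hj).2
    rw [sum_block_mul_eq_zero_of_notMem ζ hR (hbj ▸ fun h ↦ hm (h ▸ mem_insert_self _ _))
      (hbj ▸ fun h ↦ hm (mem_insert_of_mem h)), mul_zero]

end Blocks

section Draw

variable {ι Ω : Type*} [Fintype ι] [MeasurableSpace ι] [MeasurableSingletonClass ι]
  {m m₀ : MeasurableSpace Ω} {μ : Measure Ω} [IsFiniteMeasure μ]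

theorem integrable_comp_of_measurable {X : Ω → ι} (hX : Measurable X) (f : ι → ℝ) :
    Integrable (fun ω => f (X ω)) μ :=
  (Integrable.of_finite (μ := μ.map X)).comp_measurable hX

theorem integral_comp_eq_sum_integral_mul [DecidableEq ι] (hm : m ≤ m₀) {X : Ω → ι}
    (hX : Measurable X) {p : Ω → ι → ℝ}
    (hp : ∀ i, μ[fun ω => if X ω = i then (1 : ℝ) else 0|m] =ᵐ[μ] fun ω => p ω i)
    (f : ι → ℝ) :
    ∫ ω, f (X ω) ∂μ = ∑ i, (∫ ω, p ω i ∂μ) * f i := by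
  have hind : ∀ i, Integrable (fun ω => if X ω = i then (1 : ℝ) else 0) μ := fun i ↦
    integrable_comp_of_measurable hX fun j => if j = i then (1 : ℝ) else 0
  calc ∫ ω, f (X ω) ∂μ = ∫ ω, ∑ i, (if X ω = i then (1 : ℝ) else 0) * f i ∂μ := by
        simp
    _ = ∑ i, (∫ ω, (if X ω = i then (1 : ℝ) else 0) ∂μ) * f i := by
        rw [integral_finsetSum _ fun i _ ↦ (hind i).mul_const _]
        simp only [integral_mul_const]
    _ = ∑ i, (∫ ω, p ω i ∂μ) * f i := by
        refine sum_congr rfl fun i _ ↦ ?_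
        rw [← integral_condExp hm, integral_congr_ae (hp i)]

end Draw

section Step

variable {ι κ Ω : Type*} [Fintype ι] [DecidableEq ι] [MeasurableSpace ι]
  [MeasurableSingletonClass ι] [LinearOrder κ] [Fintype κ]
  {m m₀ : MeasurableSpace Ω} {μ : Measure Ω} [IsFiniteMeasure μ]

open Classical in
theorem integral_sum_block_mul_of_draw (hm : m ≤ m₀) {R : Matrix ι ι ℝ} {b : ι → κ} {k : κ}
    {ζ : ι → ℝ} {ρ : ℝ} (hR : ∀ i j, b j < b i → R i j = 0)
    (heig : ∀ j, b j = k → ∑ i' ∈ univ.filter (fun i' => b i' = k), R j i' * ζ i' = ρ * ζ j)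
    {X : Ω → ι} (hX : Measurable X) {c c' : Ω → ι → ℝ} (hc' : ∀ ω i, c' ω i = c ω i + R (X ω) i)
    {s : ℝ} (hs : s ≠ 0)
    (hp : ∀ i, μ[fun ω => if X ω = i then (1 : ℝ) else 0|m] =ᵐ[μ] fun ω => c ω i / s) :
    ∫ ω, ∑ i ∈ univ.filter (fun i => b i = k), c' ω i * ζ i ∂μ =
      (∫ ω, ∑ i ∈ univ.filter (fun i => b i = k), c ω i * ζ i ∂μ) * (1 + ρ / s) +
        (∑ l ∈ univ.filter (fun l => l < k ∧ ∃ i i', b i = l ∧ b i' = k ∧ R i i' ≠ 0),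
          ∫ ω, ∑ i ∈ univ.filter (fun i => b i = l),
            c ω i * ∑ i' ∈ univ.filter (fun i' => b i' = k), R i i' * ζ i' ∂μ) / s := by
  set w : ι → ℝ := fun j => ∑ i' ∈ univ.filter (fun i' => b i' = k), R j i' * ζ i'
  -- `c · i / s` is a.e. a conditional expectation, hence integrable
  have hc : ∀ i, Integrable (fun ω => c ω i) μ := fun i ↦ by
    simpa [div_mul_cancel₀ _ hs] using (integrable_condExp.congr (hp i)).mul_const s
  have hlin : ∀ (t : Finset ι) (u : ι → ℝ),
      ∫ ω, ∑ i ∈ t, c ω i * u i ∂μ = ∑ i ∈ t, (∫ ω, c ω i ∂μ) * u i := fun t u ↦ by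
    rw [integral_finsetSum _ fun i _ ↦ (hc i).mul_const _]
    simp only [integral_mul_const]
  have hsplit : ∀ ω, ∑ i ∈ univ.filter (fun i => b i = k), c' ω i * ζ i =
      ∑ i ∈ univ.filter (fun i => b i = k), c ω i * ζ i + w (X ω) := fun ω ↦ by
    simp only [hc', add_mul, sum_add_distrib, w]
  have hdraw := integral_comp_eq_sum_integral_mul hm hX hp w
  simp only [integral_div] at hdraw
  rw [integral_congr_ae (ae_of_all _ hsplit),
    integral_add (integrable_finsetSum _ fun i _ ↦ (hc i).mul_const _)
      (integrable_comp_of_measurable hX w), hdraw]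
  simp only [div_mul_eq_mul_div, ← sum_div, hlin, w, sum_mul_sum_block_eq ζ hR heig]
  ring

end Step

open Classical in
theorem urn_expectation_formula_general
    (D K : ℕ) (R : Matrix (Fin D) (Fin D) ℝ)
    (b : Fin D → Fin (K + 1))
    (hRblock : ∀ i j, b j < b i → R i j = 0)
    (μc : Fin (K + 1) → ℝ)
    -- each diagonal block is either zero (character 0) or irreducible with
    -- Perron-Frobenius eigenvalue `μc k`
    (hchar : ∀ k : Fin (K + 1),
      ((∀ i j, b i = k → b j = k → R i j = 0) ∧ μc k = 0) ∨
      ((∀ x y : {i // b i = k}, ∃ n : ℕ, 0 < n ∧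
          0 < (((fun p q : {i // b i = k} => R p.1 q.1) :
            Matrix {i // b i = k} {i // b i = k} ℝ) ^ n) x y) ∧
        (μc k : ℂ) ∈ spectrum ℂ
          ((Matrix.of fun p q : {i // b i = k} => R p.1 q.1).map (Complex.ofReal ·)) ∧
        ∀ z ∈ spectrum ℂ
          ((Matrix.of fun p q : {i // b i = k} => R p.1 q.1).map (Complex.ofReal ·)),
          ‖z‖ ≤ μc k))
    -- urn dynamics
    {Ω : Type*} {m0 : MeasurableSpace Ω} (μpr : MeasureTheory.Measure Ω)
    [MeasureTheory.IsProbabilityMeasure μpr]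
    (ℱ : MeasureTheory.Filtration ℕ m0)
    (χ : ℕ → Ω → Fin D)
    (hχmeas : ∀ N, Measurable[ℱ N] (χ N))
    (C : ℕ → Ω → Fin D → ℝ) (C0 : Fin D → ℝ)
    (hCinit : ∀ ω, C 0 ω = C0)
    (hCrec : ∀ N ω i, C (N + 1) ω i = C N ω i + R (χ (N + 1) ω) i)
    (hdraw : ∀ N (i : Fin D),
      μpr[(fun ω => if χ (N + 1) ω = i then (1 : ℝ) else 0)|ℱ N]
        =ᵐ[μpr] fun ω => C N ω i / ((N : ℝ) + 1))
    -- `ζ`: right PF eigenvector of `Q_k` (or the scalar 1 if `Q_k = 0`)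
    (k : Fin (K + 1)) (ζ : Fin D → ℝ)
    (hζ : ((∀ i j, b i = k → b j = k → R i j = 0) ∧ μc k = 0 ∧
            (∀ i, b i = k → ζ i = 1)) ∨
          ((∀ i, b i = k → 0 < ζ i) ∧
            (∀ i, b i = k →
              ∑ i' ∈ univ.filter (fun i' => b i' = k), R i i' * ζ i' = μc k * ζ i))) :
    ∀ N : ℕ,
      ∫ ω, (∑ i ∈ univ.filter (fun i => b i = k), C N ω i * ζ i) ∂μpr =
        (∏ n ∈ Finset.range N, (1 + μc k / ((n : ℝ) + 1))) *
          ((∑ i ∈ univ.filter (fun i => b i = k), C0 i * ζ i) +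
            ∑ m ∈ univ.filter
                (fun m => m < k ∧ ∃ i i', b i = m ∧ b i' = k ∧ R i i' ≠ 0),
              ∑ n ∈ Finset.range N,
                (∫ ω, (∑ i ∈ univ.filter (fun i => b i = m),
                    C n ω i *
                      ∑ i' ∈ univ.filter (fun i' => b i' = k), R i i' * ζ i') ∂μpr) /
                  (((n : ℝ) + 1) *
                    ∏ l ∈ Finset.range (n + 1), (1 + μc k / ((l : ℝ) + 1)))) := by
  intro N
  have hμ : 0 ≤ μc k := by
    rcases hchar k with ⟨-, h0⟩ | ⟨-, hmem, hle⟩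
    · exact h0.ge
    · simpa using (norm_nonneg _).trans (hle _ hmem)
  have heig : ∀ j, b j = k →
      ∑ i' ∈ univ.filter (fun i' => b i' = k), R j i' * ζ i' = μc k * ζ j := by
    rcases hζ with ⟨hQ, hμ0, -⟩ | ⟨-, heig⟩
    · intro j hj
      rw [hμ0, zero_mul]
      exact sum_eq_zero fun i' hi' ↦ by rw [hQ j i' hj (mem_filter.1 hi').2, zero_mul]
    · exact heig
  have hstep := fun n : ℕ ↦ integral_sum_block_mul_of_draw (ℱ.le n) hRblock heig
    ((hχmeas (n + 1)).mono (ℱ.le _) le_rfl) (hCrec n) (by positivity) (hdraw n)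
  rw [eq_prod_mul_add_sum_div_prod_of_succ
    (x := fun n ↦ ∫ ω, ∑ i ∈ univ.filter (fun i => b i = k), C n ω i * ζ i ∂μpr)
    (fun n ↦ by positivity) hstep N]
  simp only [hCinit, integral_const, probReal_univ, one_smul, sum_comm (s := range N), div_div,
    sum_div]
  -- the two sides differ only in their `Decidable` instances
  congr!

open Classical in
/-- Urn model with balanced block upper triangular replacement matrix: the expectation
of `C_N^{(k)} ζ` equals
`Π_N(μ_k) (C_0^{(k)} ζ + ∑_{m<k, Q_{mk}≠0} ∑_{n<N} E[C_n^{(m)} Q_{mk} ζ] / ((n+1) Π_{n+1}(μ_k)))`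
where `Π_N(z) = ∏_{n=0}^{N-1} (1 + z/(n+1))`. -/
theorem urn_expectation_formula
    (D K J : ℕ) (R : Matrix (Fin D) (Fin D) ℝ)
    (b : Fin D → Fin (K + 1)) (hb : Monotone b) (hbsurj : Function.Surjective b)
    (hRpos : ∀ i j, 0 ≤ R i j) (hRrow : ∀ i, ∑ j, R i j = 1)
    (hRblock : ∀ i j, b j < b i → R i j = 0)
    (μc : Fin (K + 1) → ℝ)
    -- each diagonal block is either zero (character 0) or irreducible with
    -- Perron-Frobenius eigenvalue `μc k`
    (hchar : ∀ k : Fin (K + 1),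
      ((∀ i j, b i = k → b j = k → R i j = 0) ∧ μc k = 0) ∨
      ((∀ x y : {i // b i = k}, ∃ n : ℕ, 0 < n ∧
          0 < (((fun p q : {i // b i = k} => R p.1 q.1) :
            Matrix {i // b i = k} {i // b i = k} ℝ) ^ n) x y) ∧
        (μc k : ℂ) ∈ spectrum ℂ
          ((Matrix.of fun p q : {i // b i = k} => R p.1 q.1).map (Complex.ofReal ·)) ∧
        ∀ z ∈ spectrum ℂ
          ((Matrix.of fun p q : {i // b i = k} => R p.1 q.1).map (Complex.ofReal ·)),
          ‖z‖ ≤ μc k))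
    -- urn dynamics
    {Ω : Type*} {m0 : MeasurableSpace Ω} (μpr : MeasureTheory.Measure Ω)
    [MeasureTheory.IsProbabilityMeasure μpr]
    (ℱ : MeasureTheory.Filtration ℕ m0)
    (χ : ℕ → Ω → Fin D)
    (hχmeas : ∀ N, Measurable[ℱ N] (χ N))
    (C : ℕ → Ω → Fin D → ℝ) (C0 : Fin D → ℝ)
    (hC0pos : ∀ i, 0 < C0 i) (hC0sum : ∑ i, C0 i = 1)
    (hCinit : ∀ ω, C 0 ω = C0)
    (hCrec : ∀ N ω i, C (N + 1) ω i = C N ω i + R (χ (N + 1) ω) i)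
    (hCmeas : ∀ N, Measurable[ℱ N] (C N))
    (hdraw : ∀ N (i : Fin D),
      μpr[(fun ω => if χ (N + 1) ω = i then (1 : ℝ) else 0)|ℱ N]
        =ᵐ[μpr] fun ω => C N ω i / ((N : ℝ) + 1))
    -- `ζ`: right PF eigenvector of `Q_k` (or the scalar 1 if `Q_k = 0`)
    (k : Fin (K + 1)) (ζ : Fin D → ℝ)
    (hζ : ((∀ i j, b i = k → b j = k → R i j = 0) ∧ μc k = 0 ∧
            (∀ i, b i = k → ζ i = 1)) ∨
          ((∀ i, b i = k → 0 < ζ i) ∧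
            (∀ i, b i = k →
              ∑ i' ∈ univ.filter (fun i' => b i' = k), R i i' * ζ i' = μc k * ζ i))) :
    ∀ N : ℕ,
      ∫ ω, (∑ i ∈ univ.filter (fun i => b i = k), C N ω i * ζ i) ∂μpr =
        (∏ n ∈ Finset.range N, (1 + μc k / ((n : ℝ) + 1))) *
          ((∑ i ∈ univ.filter (fun i => b i = k), C0 i * ζ i) +
            ∑ m ∈ univ.filter
                (fun m => m < k ∧ ∃ i i', b i = m ∧ b i' = k ∧ R i i' ≠ 0),
              ∑ n ∈ Finset.range N,
                (∫ ω, (∑ i ∈ univ.filter (fun i => b i = m),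
                    C n ω i *
                      ∑ i' ∈ univ.filter (fun i' => b i' = k), R i i' * ζ i') ∂μpr) /
                  (((n : ℝ) + 1) *
                    ∏ l ∈ Finset.range (n + 1), (1 + μc k / ((l : ℝ) + 1)))) :=
  urn_expectation_formula_general D K R b hRblock μc hchar μpr ℱ χ hχmeas C C0 hCinit hCrec hdraw k
    ζ hζ
end

section
/- In the urn model with balanced block upper triangular replacement matrix R, the process M_N = C_N^{(k)} ζ / Π_N(μ_k) − ∑_{m<k, Q_{mk}≠0} ∑_{n=0}^{N-1} C_n^{(m)} Q_{mk} ζ / ((n+1) Π_{n+1}(μ_k)) is a martingale with respect to the filtration F_N, and there is a constant c > 0 with E[(ΔM_N)²] ≤ c / ((N+1) Π_{N+1}(μ_k)²) · ∑_{m≤k, Q_{mk}≠0} E[C_N^{(m)} 𝟙], where Q_{kk} = Q_k and 𝟙 is the all-ones vector. -/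
open Matrix Finset MeasureTheory

/-!
Given `F_N`, the draw `χ_{N+1}` has law `C_N / (N + 1)`. So for every vector `q` the compensated
draw `q(χ_{N+1}) - C_N q / (N + 1)` is a martingale difference, and by Cauchy–Schwarz its second
moment is at most `4 ∑_j q_j² E[C_N^{(j)}] / (N + 1)`.

Take `q = Q_{·k} ζ`, the part of `R ζ` that lands in block `k`. Because `R` is block upper
triangular, `C_N q = μ_k C_N^{(k)} ζ + ∑_{m<k} C_N^{(m)} Q_{mk} ζ`. The normalisation by `Π_N(μ_k)`
absorbs the first term and the compensator absorbs the others, so `ΔM_N` is the compensated draw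
divided by `Π_{N+1}(μ_k)`. The support of `q` lies in the blocks `m ≤ k` with `Q_{mk} ≠ 0`, which
gives the sum on the right of the bound.
-/

lemma Finset.sum_eq_sum_fiberwise_of_support {ι κ M : Type*} [Fintype ι] [DecidableEq κ]
    [AddCommMonoid M] (b : ι → κ) (A : Finset κ) {f : ι → M} (hf : ∀ j, f j ≠ 0 → b j ∈ A) :
    ∑ j, f j = ∑ m ∈ A, ∑ j ∈ univ.filter (fun j => b j = m), f j := by
  rw [sum_fiberwise_eq_sum_filter]
  refine (sum_subset (filter_subset _ _) fun j _ hj => ?_).symm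
  by_contra h
  exact hj (mem_filter.2 ⟨mem_univ j, hf j h⟩)

lemma Finset.sum_sq_mul_le_of_support {ι κ : Type*} [Fintype ι] [DecidableEq κ] (b : ι → κ)
    (A : Finset κ) {q E : ι → ℝ} (hq : ∀ j, q j ≠ 0 → b j ∈ A) (hE : ∀ j, 0 ≤ E j) :
    ∑ j, q j ^ 2 * E j ≤ (∑ j, q j ^ 2) * ∑ m ∈ A, ∑ j ∈ univ.filter (fun j => b j = m), E j := by
  rw [sum_eq_sum_fiberwise_of_support b A (fun j hj => hq j fun h0 => hj (by rw [h0]; ring)),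
    mul_sum]
  gcongr with m _
  rw [mul_sum]
  exact sum_le_sum fun j _ =>
    mul_le_mul_of_nonneg_right (single_le_sum (fun _ _ => sq_nonneg _) (mem_univ j)) (hE j)

/-- The paper's `Π_N(z)`. -/
noncomputable def growthFactor (z : ℝ) (N : ℕ) : ℝ := ∏ n ∈ range N, (1 + z / ((n : ℝ) + 1))

lemma growthFactor_succ (z : ℝ) (N : ℕ) :
    growthFactor z (N + 1) = growthFactor z N * (1 + z / ((N : ℝ) + 1)) :=
  prod_range_succ _ _

lemma growthFactor_pos {z : ℝ} (hz : 0 ≤ z) (N : ℕ) : 0 < growthFactor z N :=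
  prod_pos fun _ _ => by positivity

section Blocks

variable {ι κ : Type*} [Fintype ι] [LinearOrder κ] (R : Matrix ι ι ℝ) (b : ι → κ) (k : κ)
  (ζ : ι → ℝ)

/-- The vector `Q_{·k} ζ`: the columns of `R` in block `k`, applied to `ζ`. -/
def blockDrift (j : ι) : ℝ := ∑ i' ∈ univ.filter (fun i' => b i' = k), R j i' * ζ i'

variable {R b k ζ} in
lemma blockDrift_ne_zero (hR : ∀ i j, b j < b i → R i j = 0) {j : ι}
    (h : blockDrift R b k ζ j ≠ 0) : b j ≤ k ∧ ∃ i i', b i = b j ∧ b i' = k ∧ R i i' ≠ 0 := by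
  obtain ⟨i', hi', hne⟩ := exists_ne_zero_of_sum_ne_zero h
  have hbi' : b i' = k := (mem_filter.1 hi').2
  have hR' : R j i' ≠ 0 := left_ne_zero_of_mul hne
  exact ⟨not_lt.1 fun hlt => hR' (hR j i' (hbi' ▸ hlt)), j, i', rfl, hbi', hR'⟩

variable {R b k ζ} in
lemma blockDrift_eq_zero_of_diagonal_block_eq_zero
    (hzero : ∀ i j, b i = k → b j = k → R i j = 0) {i : ι} (hi : b i = k) :
    blockDrift R b k ζ i = 0 :=
  sum_eq_zero fun i' hi' => by rw [hzero i i' hi (mem_filter.1 hi').2, zero_mul]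

variable [Fintype κ]

open Classical in
lemma sum_mul_blockDrift (hR : ∀ i j, b j < b i → R i j = 0) {μ : ℝ}
    (heig : ∀ i, b i = k → blockDrift R b k ζ i = μ * ζ i) (c : ι → ℝ) :
    ∑ j, c j * blockDrift R b k ζ j =
      μ * ∑ i ∈ univ.filter (fun i => b i = k), c i * ζ i +
        ∑ m ∈ univ.filter (fun m => m < k ∧ ∃ i i', b i = m ∧ b i' = k ∧ R i i' ≠ 0),
          ∑ i ∈ univ.filter (fun i => b i = m), c i * blockDrift R b k ζ i := by
  set A := univ.filter (fun m => m < k ∧ ∃ i i', b i = m ∧ b i' = k ∧ R i i' ≠ 0)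
  have hkA : k ∉ A := by simp [A]
  rw [sum_eq_sum_fiberwise_of_support b (insert k A), sum_insert hkA, mul_sum]
  · congr 1
    exact sum_congr rfl fun i hi => by rw [heig i (mem_filter.1 hi).2]; ring
  · intro j hj
    obtain ⟨hle, hconn⟩ := blockDrift_ne_zero hR (right_ne_zero_of_mul hj)
    rcases hle.lt_or_eq with hlt | heq
    · exact mem_insert_of_mem (mem_filter.2 ⟨mem_univ _, hlt, hconn⟩)
    · exact heq ▸ mem_insert_self _ _

end Blocks

/-- `C N` is the composition after `N` draws and `χ (N + 1)` the colour of the next draw. The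
initial mass is `1`, so the total mass after `N` draws is the `N + 1` of `draw_law`. -/
structure IsUrnProcess {ι Ω : Type*} [Fintype ι] [DecidableEq ι] [MeasurableSpace ι]
    {m0 : MeasurableSpace Ω} (μ : Measure Ω) (ℱ : Filtration ℕ m0) (R : Matrix ι ι ℝ)
    (χ : ℕ → Ω → ι) (C : ℕ → Ω → ι → ℝ) : Prop where
  replacement_nonneg : ∀ i j, 0 ≤ R i j
  replacement_balanced : ∀ i, ∑ j, R i j = 1
  initial_nonneg : ∀ ω i, 0 ≤ C 0 ω i
  initial_sum : ∀ ω, ∑ i, C 0 ω i = 1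
  counts_succ : ∀ N ω i, C (N + 1) ω i = C N ω i + R (χ (N + 1) ω) i
  draw_measurable : ∀ N, Measurable[ℱ N] (χ N)
  counts_measurable : ∀ N, Measurable[ℱ N] (C N)
  draw_law : ∀ N i, μ[fun ω => if χ (N + 1) ω = i then (1 : ℝ) else 0|ℱ N]
    =ᵐ[μ] fun ω => C N ω i / ((N : ℝ) + 1)

noncomputable def compensatedDraw {ι Ω : Type*} [Fintype ι] (χ : ℕ → Ω → ι)
    (C : ℕ → Ω → ι → ℝ) (q : ι → ℝ) (N : ℕ) (ω : Ω) : ℝ :=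
  q (χ (N + 1) ω) - (∑ j, C N ω j * q j) / ((N : ℝ) + 1)

namespace IsUrnProcess

variable {ι Ω : Type*} [Fintype ι] [DecidableEq ι] [MeasurableSpace ι]
  {m0 : MeasurableSpace Ω} {μ : Measure Ω} {ℱ : Filtration ℕ m0} {R : Matrix ι ι ℝ}
  {χ : ℕ → Ω → ι} {C : ℕ → Ω → ι → ℝ}

lemma nonneg (hu : IsUrnProcess μ ℱ R χ C) (N : ℕ) (ω : Ω) (i : ι) : 0 ≤ C N ω i := by
  induction N with
  | zero => exact hu.initial_nonneg ω i
  | succ N ih => rw [hu.counts_succ]; exact add_nonneg ih (hu.replacement_nonneg _ i)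

lemma sum_eq (hu : IsUrnProcess μ ℱ R χ C) (N : ℕ) (ω : Ω) : ∑ i, C N ω i = N + 1 := by
  induction N with
  | zero => simpa using hu.initial_sum ω
  | succ N ih =>
    simp only [hu.counts_succ, sum_add_distrib, ih, hu.replacement_balanced]
    push_cast
    ring

lemma apply_le (hu : IsUrnProcess μ ℱ R χ C) (N : ℕ) (ω : Ω) (i : ι) : C N ω i ≤ N + 1 :=
  hu.sum_eq N ω ▸ single_le_sum (fun j _ => hu.nonneg N ω j) (mem_univ i)

lemma measurable_apply (hu : IsUrnProcess μ ℱ R χ C) {n N : ℕ} (h : n ≤ N) (i : ι) :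
    Measurable[ℱ N] fun ω => C n ω i :=
  ((measurable_pi_apply i).comp (hu.counts_measurable n)).mono (ℱ.mono h) le_rfl

lemma integrable [IsFiniteMeasure μ] (hu : IsUrnProcess μ ℱ R χ C) (N : ℕ) (i : ι) :
    Integrable (fun ω => C N ω i) μ := by
  refine (integrable_const ((N : ℝ) + 1)).mono'
    ((hu.measurable_apply le_rfl i).mono (ℱ.le N) le_rfl).aestronglyMeasurable
    (ae_of_all _ fun ω => ?_)
  rw [Real.norm_of_nonneg (hu.nonneg N ω i)]
  exact hu.apply_le N ω i

lemma integrable_sum_mul_div [IsFiniteMeasure μ] (hu : IsUrnProcess μ ℱ R χ C) (q : ι → ℝ)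
    (N : ℕ) : Integrable (fun ω => (∑ j, C N ω j * q j) / ((N : ℝ) + 1)) μ :=
  (integrable_finsetSum _ fun j _ => (hu.integrable N j).mul_const _).div_const _

lemma sq_sum_mul_div_le (hu : IsUrnProcess μ ℱ R χ C) (q : ι → ℝ) (N : ℕ) (ω : Ω) :
    ((∑ j, C N ω j * q j) / ((N : ℝ) + 1)) ^ 2 ≤ (∑ j, C N ω j * q j ^ 2) / ((N : ℝ) + 1) := by
  have hcs : (∑ j, C N ω j * q j) ^ 2 ≤ (∑ j, C N ω j) * ∑ j, C N ω j * q j ^ 2 :=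
    sum_sq_le_sum_mul_sum_of_sq_le_mul _ (fun j _ => hu.nonneg N ω j)
      (fun j _ => mul_nonneg (hu.nonneg N ω j) (sq_nonneg _)) fun j _ => le_of_eq (by ring)
  rw [hu.sum_eq] at hcs
  have hN : (0 : ℝ) < N + 1 := by positivity
  rw [div_pow, div_le_div_iff₀ (by positivity) hN]
  nlinarith

variable [MeasurableSingletonClass ι]

lemma integrable_comp_draw [IsFiniteMeasure μ] (hu : IsUrnProcess μ ℱ R χ C) (f : ι → ℝ)
    (N : ℕ) : Integrable (fun ω => f (χ N ω)) μ :=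
  Integrable.of_finite.comp_measurable ((hu.draw_measurable N).mono (ℱ.le N) le_rfl)

lemma condExp_comp_draw [IsFiniteMeasure μ] (hu : IsUrnProcess μ ℱ R χ C) (f : ι → ℝ)
    (N : ℕ) : μ[fun ω => f (χ (N + 1) ω)|ℱ N]
      =ᵐ[μ] fun ω => (∑ j, C N ω j * f j) / ((N : ℝ) + 1) := by
  have hrepr : (fun ω => f (χ (N + 1) ω)) =
      ∑ j, f j • fun ω => if χ (N + 1) ω = j then (1 : ℝ) else 0 := by
    ext ω
    simp
  have hlaw := ae_all_iff.2 fun j =>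
    (condExp_smul (f j) _ (ℱ N)).trans ((hu.draw_law N j).const_smul (f j))
  have hind : ∀ j, Integrable (fun ω => if χ (N + 1) ω = j then (1 : ℝ) else 0) μ :=
    fun j => hu.integrable_comp_draw (fun i => if i = j then 1 else 0) (N + 1)
  rw [hrepr]
  refine (condExp_finsetSum (fun j _ => (hind j).smul (f j)) _).trans ?_
  filter_upwards [hlaw] with ω hω
  simp only [Finset.sum_apply, hω, Pi.smul_apply, smul_eq_mul, sum_div]
  exact sum_congr rfl fun j _ => by ring

lemma integral_comp_draw [IsFiniteMeasure μ] (hu : IsUrnProcess μ ℱ R χ C) (f : ι → ℝ)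
    (N : ℕ) : ∫ ω, f (χ (N + 1) ω) ∂μ = (∑ j, f j * ∫ ω, C N ω j ∂μ) / ((N : ℝ) + 1) := by
  rw [← integral_condExp (ℱ.le N), integral_congr_ae (hu.condExp_comp_draw f N), integral_div,
    integral_finsetSum _ fun j _ => (hu.integrable N j).mul_const _]
  simp only [integral_mul_const, mul_comm]

lemma stronglyMeasurable_compensatedDraw (hu : IsUrnProcess μ ℱ R χ C) (q : ι → ℝ) (N : ℕ) :
    StronglyMeasurable[ℱ (N + 1)] (compensatedDraw χ C q N) :=
  ((measurable_of_countable q).comp (hu.draw_measurable (N + 1))).sub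
    ((Finset.measurable_sum _ fun j _ =>
      (hu.measurable_apply N.le_succ j).mul_const _).div_const _) |>.stronglyMeasurable

lemma integrable_compensatedDraw [IsFiniteMeasure μ] (hu : IsUrnProcess μ ℱ R χ C)
    (q : ι → ℝ) (N : ℕ) : Integrable (compensatedDraw χ C q N) μ :=
  (hu.integrable_comp_draw q (N + 1)).sub (hu.integrable_sum_mul_div q N)

lemma condExp_compensatedDraw [IsFiniteMeasure μ] (hu : IsUrnProcess μ ℱ R χ C) (q : ι → ℝ)
    (N : ℕ) : μ[compensatedDraw χ C q N|ℱ N] =ᵐ[μ] 0 := by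
  have hmeas : StronglyMeasurable[ℱ N] fun ω => (∑ j, C N ω j * q j) / ((N : ℝ) + 1) :=
    ((Finset.measurable_sum _ fun j _ =>
      (hu.measurable_apply le_rfl j).mul_const _).div_const _).stronglyMeasurable
  have hsub := condExp_sub (m := ℱ N) (hu.integrable_comp_draw q (N + 1))
    (hu.integrable_sum_mul_div q N)
  rw [condExp_of_stronglyMeasurable (ℱ.le N) hmeas (hu.integrable_sum_mul_div q N)] at hsub
  have hdef : compensatedDraw χ C q N = (fun ω => q (χ (N + 1) ω)) -
      fun ω => (∑ j, C N ω j * q j) / ((N : ℝ) + 1) := rfl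
  rw [hdef]
  filter_upwards [hsub, hu.condExp_comp_draw q N] with ω h1 h2
  rw [h1, Pi.sub_apply, h2, sub_self, Pi.zero_apply]

theorem martingale_of_succ_eq [IsFiniteMeasure μ] (hu : IsUrnProcess μ ℱ R χ C) (q : ι → ℝ)
    (a : ℕ → ℝ) {M : ℕ → Ω → ℝ} (hM0 : StronglyMeasurable[ℱ 0] (M 0))
    (hM0int : Integrable (M 0) μ)
    (hM : ∀ N ω, M (N + 1) ω = M N ω + a N * compensatedDraw χ C q N ω) :
    Martingale M ℱ μ := by
  have hsucc : ∀ N, M (N + 1) = M N + a N • compensatedDraw χ C q N := fun N => funext (hM N)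
  have hadp : StronglyAdapted ℱ M := by
    intro N
    induction N with
    | zero => exact hM0
    | succ N ih =>
      rw [hsucc]
      exact (ih.mono (ℱ.mono N.le_succ)).add
        ((hu.stronglyMeasurable_compensatedDraw q N).const_smul _)
  have hint : ∀ N, Integrable (M N) μ := by
    intro N
    induction N with
    | zero => exact hM0int
    | succ N ih => rw [hsucc]; exact ih.add ((hu.integrable_compensatedDraw q N).smul _)
  refine martingale_of_condExp_sub_eq_zero_nat hadp hint fun N => ?_
  rw [hsucc, add_sub_cancel_left]
  filter_upwards [condExp_smul (a N) (compensatedDraw χ C q N) (ℱ N),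
    hu.condExp_compensatedDraw q N] with ω h1 h2
  simp [h1, h2]

lemma integral_compensatedDraw_sq_le [IsFiniteMeasure μ] (hu : IsUrnProcess μ ℱ R χ C)
    (q : ι → ℝ) (N : ℕ) :
    ∫ ω, compensatedDraw χ C q N ω ^ 2 ∂μ ≤
      4 / ((N : ℝ) + 1) * ∑ j, q j ^ 2 * ∫ ω, C N ω j ∂μ := by
  set Y : Ω → ℝ := fun ω => (∑ j, C N ω j * q j ^ 2) / ((N : ℝ) + 1)
  have hpt : ∀ ω, compensatedDraw χ C q N ω ^ 2 ≤ 2 * q (χ (N + 1) ω) ^ 2 + 2 * Y ω := by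
    intro ω
    have := hu.sq_sum_mul_div_le q N ω
    simp only [compensatedDraw, Y] at this ⊢
    nlinarith [sq_nonneg (q (χ (N + 1) ω) + (∑ j, C N ω j * q j) / ((N : ℝ) + 1))]
  have hX2 := hu.integrable_comp_draw (fun i => q i ^ 2) (N + 1)
  have hY := hu.integrable_sum_mul_div (fun i => q i ^ 2) N
  have hbound : Integrable (fun ω => 2 * q (χ (N + 1) ω) ^ 2 + 2 * Y ω) μ :=
    (hX2.const_mul 2).add (hY.const_mul 2)
  have hD2 : Integrable (fun ω => compensatedDraw χ C q N ω ^ 2) μ :=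
    hbound.mono'
      (((hu.stronglyMeasurable_compensatedDraw q N).mono (ℱ.le _)).pow 2).aestronglyMeasurable
      (ae_of_all _ fun ω => by rw [Real.norm_of_nonneg (sq_nonneg _)]; exact hpt ω)
  have hYint : ∫ ω, Y ω ∂μ = (∑ j, q j ^ 2 * ∫ ω, C N ω j ∂μ) / ((N : ℝ) + 1) := by
    rw [integral_div, integral_finsetSum _ fun j _ => (hu.integrable N j).mul_const _]
    simp only [integral_mul_const, mul_comm]
  calc ∫ ω, compensatedDraw χ C q N ω ^ 2 ∂μ
      ≤ ∫ ω, 2 * q (χ (N + 1) ω) ^ 2 + 2 * Y ω ∂μ := integral_mono hD2 hbound hpt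
    _ = 4 / ((N : ℝ) + 1) * ∑ j, q j ^ 2 * ∫ ω, C N ω j ∂μ := by
      rw [integral_add (hX2.const_mul 2) (hY.const_mul 2), integral_const_mul, integral_const_mul,
        hu.integral_comp_draw (fun i => q i ^ 2), hYint]
      ring

end IsUrnProcess

section BlockMartingale

variable {ι κ Ω : Type*} [Fintype ι] [LinearOrder κ] (R : Matrix ι ι ℝ) (b : ι → κ) (k : κ)
  (μk : ℝ) (ζ : ι → ℝ) (C : ℕ → Ω → ι → ℝ)

open Classical in
/-- The process `M_N` of the theorem. -/
noncomputable def blockMartingale [Fintype κ] (N : ℕ) (ω : Ω) : ℝ :=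
  (∑ i ∈ univ.filter (fun i => b i = k), C N ω i * ζ i) / growthFactor μk N -
    ∑ m ∈ univ.filter (fun m => m < k ∧ ∃ i i', b i = m ∧ b i' = k ∧ R i i' ≠ 0),
      ∑ n ∈ range N, (∑ i ∈ univ.filter (fun i => b i = m), C n ω i * blockDrift R b k ζ i) /
        (((n : ℝ) + 1) * growthFactor μk (n + 1))

variable {R b k μk ζ C}

lemma blockMartingale_succ [Fintype κ] {χ : ℕ → Ω → ι}
    (hC : ∀ N ω i, C (N + 1) ω i = C N ω i + R (χ (N + 1) ω) i)
    (hR : ∀ i j, b j < b i → R i j = 0) (hμk : 0 ≤ μk)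
    (heig : ∀ i, b i = k → blockDrift R b k ζ i = μk * ζ i) (N : ℕ) (ω : Ω) :
    blockMartingale R b k μk ζ C (N + 1) ω = blockMartingale R b k μk ζ C N ω +
      (growthFactor μk (N + 1))⁻¹ * compensatedDraw χ C (blockDrift R b k ζ) N ω := by
  have hS : ∑ i ∈ univ.filter (fun i => b i = k), C (N + 1) ω i * ζ i =
      ∑ i ∈ univ.filter (fun i => b i = k), C N ω i * ζ i + blockDrift R b k ζ (χ (N + 1) ω) := by
    simp only [hC, add_mul, sum_add_distrib, blockDrift]
  have hP := growthFactor_pos hμk N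
  simp only [blockMartingale, compensatedDraw, hS, sum_mul_blockDrift R b k ζ hR heig (C N ω),
    sum_range_succ, sum_add_distrib, growthFactor_succ, ← sum_div]
  field_simp
  ring

lemma IsUrnProcess.integral_compensatedDraw_blockDrift_sq_le [DecidableEq ι] [MeasurableSpace ι]
    [MeasurableSingletonClass ι] {m0 : MeasurableSpace Ω} {μ : Measure Ω} [IsFiniteMeasure μ]
    {ℱ : Filtration ℕ m0} {χ : ℕ → Ω → ι} (hu : IsUrnProcess μ ℱ R χ C)
    (hR : ∀ i j, b j < b i → R i j = 0) {A : Finset κ}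
    (hA : ∀ m, (m ≤ k ∧ ∃ i i', b i = m ∧ b i' = k ∧ R i i' ≠ 0) → m ∈ A) (N : ℕ) :
    ∫ ω, compensatedDraw χ C (blockDrift R b k ζ) N ω ^ 2 ∂μ ≤
      4 * (∑ j, blockDrift R b k ζ j ^ 2) / ((N : ℝ) + 1) *
        ∑ m ∈ A, ∑ j ∈ univ.filter (fun j => b j = m), ∫ ω, C N ω j ∂μ := by
  have hsupp := sum_sq_mul_le_of_support b A (q := blockDrift R b k ζ)
    (E := fun j => ∫ ω, C N ω j ∂μ) (fun j hj => hA _ (blockDrift_ne_zero hR hj))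
    fun j => integral_nonneg fun ω => hu.nonneg N ω j
  calc ∫ ω, compensatedDraw χ C (blockDrift R b k ζ) N ω ^ 2 ∂μ
      ≤ 4 / ((N : ℝ) + 1) * ∑ j, blockDrift R b k ζ j ^ 2 * ∫ ω, C N ω j ∂μ :=
        hu.integral_compensatedDraw_sq_le _ N
    _ ≤ 4 / ((N : ℝ) + 1) * ((∑ j, blockDrift R b k ζ j ^ 2) *
          ∑ m ∈ A, ∑ j ∈ univ.filter (fun j => b j = m), ∫ ω, C N ω j ∂μ) := by
        gcongr
    _ = _ := by ring

end BlockMartingale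

open Classical in
theorem urn_martingale_and_difference_bound_general
    (D K : ℕ) (R : Matrix (Fin D) (Fin D) ℝ)
    (b : Fin D → Fin (K + 1)) (hRpos : ∀ i j, 0 ≤ R i j) (hRrow : ∀ i, ∑ j, R i j = 1)
    (hRblock : ∀ i j, b j < b i → R i j = 0)
    (μc : Fin (K + 1) → ℝ)
    -- each diagonal block is either zero (character 0) or irreducible with
    -- Perron-Frobenius eigenvalue `μc k`
    (hchar : ∀ k : Fin (K + 1),
      ((∀ i j, b i = k → b j = k → R i j = 0) ∧ μc k = 0) ∨
      ((∀ x y : {i // b i = k}, ∃ n : ℕ, 0 < n ∧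
          0 < (((fun p q : {i // b i = k} => R p.1 q.1) :
            Matrix {i // b i = k} {i // b i = k} ℝ) ^ n) x y) ∧
        (μc k : ℂ) ∈ spectrum ℂ
          ((Matrix.of fun p q : {i // b i = k} => R p.1 q.1).map (Complex.ofReal ·)) ∧
        ∀ z ∈ spectrum ℂ
          ((Matrix.of fun p q : {i // b i = k} => R p.1 q.1).map (Complex.ofReal ·)),
          ‖z‖ ≤ μc k))
    -- urn dynamics
    {Ω : Type*} {m0 : MeasurableSpace Ω} (μpr : MeasureTheory.Measure Ω)
    [MeasureTheory.IsProbabilityMeasure μpr]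
    (ℱ : MeasureTheory.Filtration ℕ m0)
    (χ : ℕ → Ω → Fin D)
    (hχmeas : ∀ N, Measurable[ℱ N] (χ N))
    (C : ℕ → Ω → Fin D → ℝ) (C0 : Fin D → ℝ)
    (hC0pos : ∀ i, 0 < C0 i) (hC0sum : ∑ i, C0 i = 1)
    (hCinit : ∀ ω, C 0 ω = C0)
    (hCrec : ∀ N ω i, C (N + 1) ω i = C N ω i + R (χ (N + 1) ω) i)
    (hCmeas : ∀ N, Measurable[ℱ N] (C N))
    (hdraw : ∀ N (i : Fin D),
      μpr[(fun ω => if χ (N + 1) ω = i then (1 : ℝ) else 0)|ℱ N]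
        =ᵐ[μpr] fun ω => C N ω i / ((N : ℝ) + 1))
    -- `ζ`: right PF eigenvector of `Q_k` (or the scalar 1 if `Q_k = 0`)
    (k : Fin (K + 1)) (ζ : Fin D → ℝ)
    (hζ : ((∀ i j, b i = k → b j = k → R i j = 0) ∧ μc k = 0 ∧
            (∀ i, b i = k → ζ i = 1)) ∨
          ((∀ i, b i = k → 0 < ζ i) ∧
            (∀ i, b i = k →
              ∑ i' ∈ univ.filter (fun i' => b i' = k), R i i' * ζ i' = μc k * ζ i)))
    (M : ℕ → Ω → ℝ)
    (hMdef : ∀ N ω, M N ω =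
      (∑ i ∈ univ.filter (fun i => b i = k), C N ω i * ζ i) /
          (∏ n ∈ Finset.range N, (1 + μc k / ((n : ℝ) + 1))) -
        ∑ m ∈ univ.filter
            (fun m => m < k ∧ ∃ i i', b i = m ∧ b i' = k ∧ R i i' ≠ 0),
          ∑ n ∈ Finset.range N,
            (∑ i ∈ univ.filter (fun i => b i = m),
                C n ω i *
                  ∑ i' ∈ univ.filter (fun i' => b i' = k), R i i' * ζ i') /
              (((n : ℝ) + 1) *
                ∏ l ∈ Finset.range (n + 1), (1 + μc k / ((l : ℝ) + 1)))) :
    Martingale M ℱ μpr ∧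
      ∃ c : ℝ, 0 < c ∧ ∀ N : ℕ,
        ∫ ω, (M (N + 1) ω - M N ω) ^ 2 ∂μpr ≤
          c / (((N : ℝ) + 1) *
              (∏ n ∈ Finset.range (N + 1), (1 + μc k / ((n : ℝ) + 1))) ^ 2) *
            ∑ m ∈ univ.filter
                (fun m => m ≤ k ∧ ∃ i i', b i = m ∧ b i' = k ∧ R i i' ≠ 0),
              ∫ ω, (∑ i ∈ univ.filter (fun i => b i = m), C N ω i) ∂μpr := by
  have hurn : IsUrnProcess μpr ℱ R χ C :=
    { replacement_nonneg := hRpos, replacement_balanced := hRrow,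
      initial_nonneg := fun ω i => hCinit ω ▸ (hC0pos i).le,
      initial_sum := fun ω => hCinit ω ▸ hC0sum, counts_succ := hCrec,
      draw_measurable := hχmeas, counts_measurable := hCmeas, draw_law := hdraw }
  have hμ : 0 ≤ μc k := by
    rcases hchar k with ⟨-, h0⟩ | ⟨-, hmem, hρ⟩
    · exact h0.ge
    · simpa using (norm_nonneg _).trans (hρ _ hmem)
  have heig : ∀ i, b i = k → blockDrift R b k ζ i = μc k * ζ i := by
    rcases hζ with ⟨hzero, hμ0, -⟩ | ⟨-, h⟩
    · intro i hi
      rw [hμ0, zero_mul, blockDrift_eq_zero_of_diagonal_block_eq_zero hzero hi]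
    · exact h
  have hM : M = blockMartingale R b k (μc k) ζ C := by
    funext N ω
    rw [hMdef, blockMartingale]
    congr
  have hM0 : M 0 = fun _ => ∑ i ∈ univ.filter (fun i => b i = k), C0 i * ζ i := by
    ext ω
    simp [hM, blockMartingale, growthFactor, hCinit]
  have hinc : ∀ N ω, M (N + 1) ω = M N ω +
      (growthFactor (μc k) (N + 1))⁻¹ * compensatedDraw χ C (blockDrift R b k ζ) N ω := by
    rw [hM]
    exact blockMartingale_succ hCrec hRblock hμ heig
  set q := blockDrift R b k ζ
  refine ⟨hurn.martingale_of_succ_eq q _ (hM0 ▸ stronglyMeasurable_const)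
    (hM0 ▸ integrable_const _) hinc, 4 * ∑ j, q j ^ 2 + 1, by positivity, fun N => ?_⟩
  set S := ∑ m ∈ univ.filter (fun m => m ≤ k ∧ ∃ i i', b i = m ∧ b i' = k ∧ R i i' ≠ 0),
    ∑ j ∈ univ.filter (fun j => b j = m), ∫ ω, C N ω j ∂μpr
  have hS : 0 ≤ S := sum_nonneg fun m _ => sum_nonneg fun j _ =>
    integral_nonneg fun ω => hurn.nonneg N ω j
  have hP := growthFactor_pos hμ (N + 1)
  calc ∫ ω, (M (N + 1) ω - M N ω) ^ 2 ∂μpr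
      = (growthFactor (μc k) (N + 1))⁻¹ ^ 2 * ∫ ω, compensatedDraw χ C q N ω ^ 2 ∂μpr := by
        simp only [hinc, add_sub_cancel_left, mul_pow, integral_const_mul]
    _ ≤ (growthFactor (μc k) (N + 1))⁻¹ ^ 2 * (4 * (∑ j, q j ^ 2) / ((N : ℝ) + 1) * S) := by
        gcongr
        exact hurn.integral_compensatedDraw_blockDrift_sq_le hRblock
          (fun m hm => by simpa using hm) N
    _ = 4 * (∑ j, q j ^ 2) / (((N : ℝ) + 1) * growthFactor (μc k) (N + 1) ^ 2) * S := by
        field_simp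
    _ ≤ (4 * ∑ j, q j ^ 2 + 1) / (((N : ℝ) + 1) * growthFactor (μc k) (N + 1) ^ 2) * S := by
        gcongr
        linarith
    _ = _ := by
        congr 1
        exact sum_congr rfl fun m _ => (integral_finsetSum _ fun i _ => hurn.integrable N i).symm

open Classical in
/-- Urn model with balanced block upper triangular replacement matrix: the process
`M_N = C_N^{(k)} ζ / Π_N(μ_k) − ∑_{m<k, Q_{mk}≠0} ∑_{n<N} C_n^{(m)} Q_{mk} ζ /((n+1)Π_{n+1}(μ_k))`
is a martingale with respect to `F_N`, and there is a constant `c > 0` with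
`E[(ΔM_N)²] ≤ c/((N+1) Π_{N+1}(μ_k)²) ∑_{m≤k, Q_{mk}≠0} E[C_N^{(m)} 𝟙]`
(where `Q_{kk} = Q_k`). -/
theorem urn_martingale_and_difference_bound
    (D K J : ℕ) (R : Matrix (Fin D) (Fin D) ℝ)
    (b : Fin D → Fin (K + 1)) (hb : Monotone b) (hbsurj : Function.Surjective b)
    (hRpos : ∀ i j, 0 ≤ R i j) (hRrow : ∀ i, ∑ j, R i j = 1)
    (hRblock : ∀ i j, b j < b i → R i j = 0)
    (μc : Fin (K + 1) → ℝ)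
    -- each diagonal block is either zero (character 0) or irreducible with
    -- Perron-Frobenius eigenvalue `μc k`
    (hchar : ∀ k : Fin (K + 1),
      ((∀ i j, b i = k → b j = k → R i j = 0) ∧ μc k = 0) ∨
      ((∀ x y : {i // b i = k}, ∃ n : ℕ, 0 < n ∧
          0 < (((fun p q : {i // b i = k} => R p.1 q.1) :
            Matrix {i // b i = k} {i // b i = k} ℝ) ^ n) x y) ∧
        (μc k : ℂ) ∈ spectrum ℂ
          ((Matrix.of fun p q : {i // b i = k} => R p.1 q.1).map (Complex.ofReal ·)) ∧
        ∀ z ∈ spectrum ℂ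
          ((Matrix.of fun p q : {i // b i = k} => R p.1 q.1).map (Complex.ofReal ·)),
          ‖z‖ ≤ μc k))
    -- urn dynamics
    {Ω : Type*} {m0 : MeasurableSpace Ω} (μpr : MeasureTheory.Measure Ω)
    [MeasureTheory.IsProbabilityMeasure μpr]
    (ℱ : MeasureTheory.Filtration ℕ m0)
    (χ : ℕ → Ω → Fin D)
    (hχmeas : ∀ N, Measurable[ℱ N] (χ N))
    (C : ℕ → Ω → Fin D → ℝ) (C0 : Fin D → ℝ)
    (hC0pos : ∀ i, 0 < C0 i) (hC0sum : ∑ i, C0 i = 1)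
    (hCinit : ∀ ω, C 0 ω = C0)
    (hCrec : ∀ N ω i, C (N + 1) ω i = C N ω i + R (χ (N + 1) ω) i)
    (hCmeas : ∀ N, Measurable[ℱ N] (C N))
    (hdraw : ∀ N (i : Fin D),
      μpr[(fun ω => if χ (N + 1) ω = i then (1 : ℝ) else 0)|ℱ N]
        =ᵐ[μpr] fun ω => C N ω i / ((N : ℝ) + 1))
    -- `ζ`: right PF eigenvector of `Q_k` (or the scalar 1 if `Q_k = 0`)
    (k : Fin (K + 1)) (ζ : Fin D → ℝ)
    (hζ : ((∀ i j, b i = k → b j = k → R i j = 0) ∧ μc k = 0 ∧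
            (∀ i, b i = k → ζ i = 1)) ∨
          ((∀ i, b i = k → 0 < ζ i) ∧
            (∀ i, b i = k →
              ∑ i' ∈ univ.filter (fun i' => b i' = k), R i i' * ζ i' = μc k * ζ i)))
    (M : ℕ → Ω → ℝ)
    (hMdef : ∀ N ω, M N ω =
      (∑ i ∈ univ.filter (fun i => b i = k), C N ω i * ζ i) /
          (∏ n ∈ Finset.range N, (1 + μc k / ((n : ℝ) + 1))) -
        ∑ m ∈ univ.filter
            (fun m => m < k ∧ ∃ i i', b i = m ∧ b i' = k ∧ R i i' ≠ 0),
          ∑ n ∈ Finset.range N,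
            (∑ i ∈ univ.filter (fun i => b i = m),
                C n ω i *
                  ∑ i' ∈ univ.filter (fun i' => b i' = k), R i i' * ζ i') /
              (((n : ℝ) + 1) *
                ∏ l ∈ Finset.range (n + 1), (1 + μc k / ((l : ℝ) + 1)))) :
    Martingale M ℱ μpr ∧
      ∃ c : ℝ, 0 < c ∧ ∀ N : ℕ,
        ∫ ω, (M (N + 1) ω - M N ω) ^ 2 ∂μpr ≤
          c / (((N : ℝ) + 1) *
              (∏ n ∈ Finset.range (N + 1), (1 + μc k / ((n : ℝ) + 1))) ^ 2) *
            ∑ m ∈ univ.filter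
                (fun m => m ≤ k ∧ ∃ i i', b i = m ∧ b i' = k ∧ R i i' ≠ 0),
              ∫ ω, (∑ i ∈ univ.filter (fun i => b i = m), C N ω i) ∂μpr :=
  urn_martingale_and_difference_bound_general D K R b hRpos hRrow hRblock μc hchar μpr ℱ χ hχmeas C
    C0 hC0pos hC0sum hCinit hCrec hCmeas hdraw k ζ hζ M hMdef
end

section
/- In the urn model with an irreducible balanced nonnegative replacement matrix Q_1 as the only block (μ_1 being its PF eigenvalue, 0 < μ_1), if ν is an eigenvalue of Q_1 other than μ_1 with Jordan chain ξ_1,…,ξ_t (ξ_0 = 0, Q_1 ξ_i = ξ_{i-1} + ν ξ_i), then C_N^{(1)} ξ_i / N^{μ_1} → 0 almost surely and in L² for each i = 1,…,t. -/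
/-!
Since `Q₁` is row-stochastic, Gershgorin's theorem and the all-ones eigenvector force `μ₁ = 1`.
Write `X_N = C_N ξ_i`. It moves by the bounded jump `(Q₁ ξ_i)(χ_{N+1})`, whose conditional mean
given `ℱ_N` is `C_N Q₁ ξ_i / (N + 1) = (X'_N + ν X_N) / (N + 1)` with `X'_N = C_N ξ_{i-1}`.
Expanding `|X_{N+1}|²` and bounding the cross term with `X'_N` by Young's inequality gives
`E|X_{N+1}|² ≤ (1 + 2ρ/(N+1)) E|X_N|² + O(N^{2γ-1})` for fixed `Re ν < ρ < γ < 1`, `γ ≥ 1/2`,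
as soon as `E|X'_N|² = O(N^{2γ})`; by induction along the Jordan chain `E|X_N|² = O(N^{2γ})`,
which is the `L²` claim. Almost surely: these moments are summable along `N = m^p` once
`p (2 - 2γ) > 1` (Borel–Cantelli), and the bounded jumps interpolate between consecutive
`p`-th powers.
-/

open Matrix Finset MeasureTheory Filter Topology

section Spectrum

variable {K n : Type*} [NormedField K] [Fintype n] [DecidableEq n]

theorem norm_le_of_mem_spectrum_of_forall_sum_norm_le {A : Matrix n n K} {r : ℝ}
    (hA : ∀ i, ∑ j, ‖A i j‖ ≤ r) {z : K} (hz : z ∈ spectrum K A) : ‖z‖ ≤ r := by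
  rw [← Matrix.spectrum_toLin', ← Module.End.hasEigenvalue_iff_mem_spectrum] at hz
  obtain ⟨k, hk⟩ := eigenvalue_mem_ball hz
  rw [Metric.mem_closedBall, dist_eq_norm] at hk
  calc ‖z‖ ≤ ‖z - A k k‖ + ‖A k k‖ := norm_le_norm_sub_add z (A k k)
    _ ≤ ∑ j ∈ univ.erase k, ‖A k j‖ + ‖A k k‖ := by gcongr
    _ = ∑ j, ‖A k j‖ := sum_erase_add _ _ (mem_univ k)
    _ ≤ r := hA k

theorem one_mem_spectrum_of_forall_sum_eq_one [Nonempty n] {A : Matrix n n K}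
    (hA : ∀ i, ∑ j, A i j = 1) : (1 : K) ∈ spectrum K A := by
  rw [← Matrix.spectrum_toLin', ← Module.End.hasEigenvalue_iff_mem_spectrum]
  refine Module.End.hasEigenvalue_of_hasEigenvector (x := fun _ => 1) ⟨?_, ?_⟩
  · rw [Module.End.mem_eigenspace_iff]
    ext i
    simp [Matrix.toLin'_apply, Matrix.mulVec, dotProduct, hA i]
  · exact Function.ne_iff.2 ⟨Classical.arbitrary n, one_ne_zero⟩

end Spectrum

theorem eq_one_of_mem_spectrum_of_forall_norm_le {n : Type*} [Fintype n] [DecidableEq n]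
    {Q : Matrix n n ℝ} (hpos : ∀ i j, 0 ≤ Q i j) (hrow : ∀ i, ∑ j, Q i j = 1) {μ : ℝ}
    (hμ : (μ : ℂ) ∈ spectrum ℂ (Q.map (Complex.ofReal ·)))
    (hμtop : ∀ z ∈ spectrum ℂ (Q.map (Complex.ofReal ·)), ‖z‖ ≤ μ) : μ = 1 := by
  have hrowC : ∀ i, ∑ j, Q.map (Complex.ofReal ·) i j = 1 := fun i => by
    simp [← Complex.ofReal_sum, hrow i]
  have hnorm : ∀ i, ∑ j, ‖Q.map (Complex.ofReal ·) i j‖ ≤ 1 := fun i => by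
    simp [abs_of_nonneg (hpos i _), hrow i]
  have : Nonempty n := by
    by_contra hn
    rw [not_nonempty_iff] at hn
    simp [spectrum.of_subsingleton] at hμ
  have hle : μ ≤ 1 := (le_abs_self μ).trans <| by
    simpa using norm_le_of_mem_spectrum_of_forall_sum_norm_le hnorm hμ
  have hge : 1 ≤ μ := by simpa using hμtop 1 (one_mem_spectrum_of_forall_sum_eq_one hrowC)
  exact le_antisymm hle hge

theorem rpow_mul_one_add_div_le_add_one_rpow {x p : ℝ} (hx : 0 < x) (hp : 1 ≤ p) :
    x ^ p * (1 + p / x) ≤ (x + 1) ^ p := by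
  have hsplit : x + 1 = x * (1 + 1 / x) := by field_simp
  rw [hsplit, Real.mul_rpow hx.le (by positivity), ← mul_one_div p x]
  gcongr
  exact one_add_mul_self_le_rpow_one_add (by linarith [one_div_pos.2 hx]) hp

theorem exists_le_mul_rpow_of_le_one_add_div_mul_add {a : ℕ → ℝ} {ρ γ c : ℝ} (hρ : 0 ≤ ρ)
    (hργ : ρ < γ) (hγ : 1 ≤ 2 * γ)
    (ha : ∀ N : ℕ, a (N + 1) ≤ (1 + 2 * ρ / (N + 1)) * a N + c * ((N : ℝ) + 1) ^ (2 * γ - 1)) :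
    ∃ K, ∀ N : ℕ, a N ≤ K * ((N : ℝ) + 1) ^ (2 * γ) := by
  set K := max (a 0) (max (c / (2 * (γ - ρ))) 0)
  have hK0 : 0 ≤ K := le_max_of_le_right (le_max_right _ _)
  have hcK : c ≤ 2 * (γ - ρ) * K := by
    rw [← div_le_iff₀' (by linarith)]
    exact le_max_of_le_right (le_max_left _ _)
  refine ⟨K, fun N => ?_⟩
  induction N with
  | zero =>
    rw [Nat.cast_zero, zero_add, Real.one_rpow, mul_one]
    exact le_max_left _ _
  | succ N ih =>
    set x : ℝ := (N : ℝ) + 1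
    have hx : 0 < x := by positivity
    have hxp : x ^ (2 * γ - 1) = x ^ (2 * γ) / x := by
      rw [Real.rpow_sub hx, Real.rpow_one]
    calc a (N + 1) ≤ (1 + 2 * ρ / x) * a N + c * x ^ (2 * γ - 1) := ha N
      _ ≤ (1 + 2 * ρ / x) * (K * x ^ (2 * γ)) + 2 * (γ - ρ) * K * x ^ (2 * γ - 1) := by
          gcongr
      _ = K * (x ^ (2 * γ) * (1 + 2 * γ / x)) := by rw [hxp]; field_simp; ring
      _ ≤ K * (((N + 1 : ℕ) : ℝ) + 1) ^ (2 * γ) := by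
          gcongr
          simpa [x] using rpow_mul_one_add_div_le_add_one_rpow hx hγ

theorem le_add_mul_of_forall_le_add {u : ℕ → ℝ} {L : ℝ} (hstep : ∀ n, u (n + 1) ≤ u n + L)
    (a k : ℕ) : u (a + k) ≤ u a + k * L := by
  induction k with
  | zero => simp
  | succ k ih =>
    rw [← add_assoc]
    push_cast
    linarith [hstep (a + k)]

theorem tendsto_div_of_tendsto_div_pow {u : ℕ → ℝ} {L : ℝ} {p : ℕ} (hp : p ≠ 0)
    (hu : ∀ n, 0 ≤ u n) (hL : 0 ≤ L) (hstep : ∀ n, u (n + 1) ≤ u n + L)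
    (h : Tendsto (fun m : ℕ => u (m ^ p) / (m : ℝ) ^ p) atTop (𝓝 0)) :
    Tendsto (fun n : ℕ => u n / n) atTop (𝓝 0) := by
  set root : ℕ → ℕ := fun n => Nat.findGreatest (fun m => m ^ p ≤ n) n
  have hroot_pow_le (n : ℕ) : root n ^ p ≤ n :=
    Nat.findGreatest_spec (P := fun m => m ^ p ≤ n) (Nat.zero_le n) (by simp [zero_pow hp])
  have hlt_root_add_one_pow (n : ℕ) : n < (root n + 1) ^ p := by
    by_contra! hle
    exact Nat.findGreatest_is_greatest (Nat.lt_succ_self _)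
      ((Nat.le_self_pow hp _).trans hle) hle
  have hroot : Tendsto root atTop atTop := tendsto_atTop_atTop.2 fun k =>
    ⟨k ^ p, fun n hn => Nat.le_findGreatest ((Nat.le_self_pow hp k).trans hn) hn⟩
  set g : ℕ → ℝ := fun m => u (m ^ p) / (m : ℝ) ^ p + L * ((1 + 1 / (m : ℝ)) ^ p - 1)
  have hg : Tendsto g atTop (𝓝 0) := by
    have hinv : Tendsto (fun m : ℕ => (1 + 1 / (m : ℝ)) ^ p - 1) atTop (𝓝 0) := by
      simpa using
        (((tendsto_one_div_atTop_nhds_zero_nat (𝕜 := ℝ)).const_add 1).pow p).sub_const 1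
    simpa [g] using h.add (hinv.const_mul L)
  refine squeeze_zero' (Eventually.of_forall fun n => div_nonneg (hu n) n.cast_nonneg) ?_
    (hg.comp hroot)
  filter_upwards [hroot.eventually_ge_atTop 1] with n hn
  set m := root n
  have hm : (0 : ℝ) < (m : ℝ) ^ p := by positivity
  have hmn : ((m ^ p : ℕ) : ℝ) ≤ n := by exact_mod_cast hroot_pow_le n
  have hgap : u n ≤ u (m ^ p) + ((m + 1 : ℝ) ^ p - (m : ℝ) ^ p) * L := by
    have hn' : ((n : ℕ) : ℝ) < ((m + 1) ^ p : ℕ) := by exact_mod_cast hlt_root_add_one_pow n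
    have := le_add_mul_of_forall_le_add hstep (m ^ p) (n - m ^ p)
    rw [Nat.add_sub_cancel' (hroot_pow_le n), Nat.cast_sub (hroot_pow_le n)] at this
    push_cast at hn' hmn this
    nlinarith
  calc u n / n ≤ u n / (m : ℝ) ^ p := by
        gcongr
        · exact hu n
        · exact_mod_cast hmn
    _ ≤ (u (m ^ p) + ((m + 1 : ℝ) ^ p - (m : ℝ) ^ p) * L) / (m : ℝ) ^ p := by gcongr
    _ = g m := by
        have hpow : (1 + 1 / (m : ℝ)) ^ p = ((m : ℝ) + 1) ^ p / (m : ℝ) ^ p := by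
          rw [← div_pow, add_div, div_self (by positivity)]
        simp only [g, hpow]
        field_simp

section Moments

variable {Ω : Type*} {m0 : MeasurableSpace Ω} {μ : Measure Ω}

theorem ae_tendsto_zero_of_summable_integral {f : ℕ → Ω → ℝ} (hf : ∀ n ω, 0 ≤ f n ω)
    (hfi : ∀ n, Integrable (f n) μ) (hs : Summable fun n => ∫ ω, f n ω ∂μ) :
    ∀ᵐ ω ∂μ, Tendsto (fun n => f n ω) atTop (𝓝 0) := by
  have hmeas (n : ℕ) : AEMeasurable (fun ω => ENNReal.ofReal (f n ω)) μ :=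
    (hfi n).aemeasurable.ennreal_ofReal
  have hfin : ∫⁻ ω, ∑' n, ENNReal.ofReal (f n ω) ∂μ ≠ ⊤ := by
    rw [lintegral_tsum hmeas]
    simp_rw [← ofReal_integral_eq_lintegral_ofReal (hfi _) (Eventually.of_forall (hf _)),
      ← ENNReal.ofReal_tsum_of_nonneg (fun n => integral_nonneg (hf n)) hs]
    exact ENNReal.ofReal_ne_top
  filter_upwards [ae_lt_top' (AEMeasurable.tsum hmeas) hfin] with ω hω
  refine ((ENNReal.tendsto_toReal ENNReal.zero_ne_top).comp
    (ENNReal.tendsto_atTop_zero_of_tsum_ne_top hω.ne)).congr fun n => ?_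
  exact ENNReal.toReal_ofReal (hf n ω)

theorem integral_sq_div_natCast_le {f : Ω → ℝ} {K γ : ℝ} {N : ℕ} (hN : 1 ≤ N) (hK : 0 ≤ K)
    (hf : ∫ ω, f ω ^ 2 ∂μ ≤ K * ((N : ℝ) + 1) ^ (2 * γ)) :
    ∫ ω, (f ω / N) ^ 2 ∂μ ≤ 4 * K * ((N : ℝ) + 1) ^ (2 * γ - 2) := by
  have hN' : (1 : ℝ) ≤ N := by exact_mod_cast hN
  have hpow : ((N : ℝ) + 1) ^ (2 * γ - 2) = ((N : ℝ) + 1) ^ (2 * γ) / ((N : ℝ) + 1) ^ 2 := by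
    rw [Real.rpow_sub (by positivity), Real.rpow_two]
  have hinv : 1 / (N : ℝ) ^ 2 ≤ 4 / ((N : ℝ) + 1) ^ 2 := by
    rw [div_le_div_iff₀ (by positivity) (by positivity)]
    nlinarith
  simp_rw [div_pow]
  rw [integral_div, hpow]
  calc (∫ ω, f ω ^ 2 ∂μ) / (N : ℝ) ^ 2
      ≤ K * ((N : ℝ) + 1) ^ (2 * γ) * (1 / (N : ℝ) ^ 2) := by rw [mul_one_div]; gcongr
    _ ≤ K * ((N : ℝ) + 1) ^ (2 * γ) * (4 / ((N : ℝ) + 1) ^ 2) := by gcongr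
    _ = 4 * K * (((N : ℝ) + 1) ^ (2 * γ) / ((N : ℝ) + 1) ^ 2) := by ring

variable {u : ℕ → Ω → ℝ} {K γ : ℝ}

theorem nonneg_of_integral_sq_le
    (hmom : ∀ N : ℕ, ∫ ω, u N ω ^ 2 ∂μ ≤ K * ((N : ℝ) + 1) ^ (2 * γ)) : 0 ≤ K := by
  simpa using (integral_nonneg fun ω => sq_nonneg (u 0 ω)).trans (hmom 0)

theorem tendsto_integral_sq_div_of_integral_sq_le (hγ : γ < 1)
    (hmom : ∀ N : ℕ, ∫ ω, u N ω ^ 2 ∂μ ≤ K * ((N : ℝ) + 1) ^ (2 * γ)) :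
    Tendsto (fun N : ℕ => ∫ ω, (u N ω / N) ^ 2 ∂μ) atTop (𝓝 0) := by
  have hbound : Tendsto (fun N : ℕ => 4 * K * ((N : ℝ) + 1) ^ (2 * γ - 2)) atTop (𝓝 0) := by
    have := (tendsto_rpow_neg_atTop (by linarith : 0 < 2 - 2 * γ)).comp
      (tendsto_atTop_add_const_right _ 1 tendsto_natCast_atTop_atTop)
    simpa [Function.comp_def] using this.const_mul (4 * K)
  refine squeeze_zero' (Eventually.of_forall fun N => integral_nonneg fun ω => sq_nonneg _) ?_
    hbound
  filter_upwards [eventually_ge_atTop 1] with N hN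
  exact integral_sq_div_natCast_le hN (nonneg_of_integral_sq_le hmom) (hmom N)

theorem ae_tendsto_div_of_integral_sq_le {L : ℝ} (hγ : γ < 1) (hu : ∀ N ω, 0 ≤ u N ω)
    (hL : 0 ≤ L) (hstep : ∀ N ω, u (N + 1) ω ≤ u N ω + L)
    (hint : ∀ N, Integrable (fun ω => u N ω ^ 2) μ)
    (hmom : ∀ N : ℕ, ∫ ω, u N ω ^ 2 ∂μ ≤ K * ((N : ℝ) + 1) ^ (2 * γ)) :
    ∀ᵐ ω ∂μ, Tendsto (fun N : ℕ => u N ω / N) atTop (𝓝 0) := by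
  obtain ⟨p, hp⟩ := exists_nat_gt (1 / (2 - 2 * γ))
  have hγ' : 0 < 2 - 2 * γ := by linarith
  have hp1 : 1 < p * (2 - 2 * γ) := by rwa [div_lt_iff₀ hγ'] at hp
  have hp0 : p ≠ 0 := by rintro rfl; simp at hp1; linarith
  set f : ℕ → Ω → ℝ := fun m ω => (u (m ^ p) ω / (m : ℝ) ^ p) ^ 2
  have hK := nonneg_of_integral_sq_le hmom
  have hf_le (m : ℕ) : ∫ ω, f m ω ∂μ ≤ 4 * K * (m : ℝ) ^ (p * (2 * γ - 2)) := by
    rcases Nat.eq_zero_or_pos m with rfl | hm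
    · simp [f, zero_pow hp0, Real.zero_rpow (by nlinarith : p * (2 * γ - 2) ≠ 0)]
    have hm' : (0 : ℝ) < (m : ℝ) ^ p := by positivity
    calc ∫ ω, f m ω ∂μ ≤ 4 * K * (((m ^ p : ℕ) : ℝ) + 1) ^ (2 * γ - 2) := by
          simpa [f] using integral_sq_div_natCast_le (Nat.one_le_pow _ _ hm) hK (hmom (m ^ p))
      _ ≤ 4 * K * ((m : ℝ) ^ p) ^ (2 * γ - 2) := by
          push_cast
          exact mul_le_mul_of_nonneg_left
            (Real.rpow_le_rpow_of_nonpos hm' (by linarith) (by linarith)) (by positivity)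
      _ = 4 * K * (m : ℝ) ^ (p * (2 * γ - 2)) := by
          rw [← Real.rpow_natCast, ← Real.rpow_mul (by positivity)]
  have hsum : Summable fun m => ∫ ω, f m ω ∂μ :=
    Summable.of_nonneg_of_le (fun m => integral_nonneg fun ω => sq_nonneg _) hf_le
      ((Real.summable_nat_rpow.2 (by linarith)).mul_left (4 * K))
  have hfi (m : ℕ) : Integrable (f m) μ := by
    simpa [f, div_pow] using (hint (m ^ p)).div_const (((m : ℝ) ^ p) ^ 2)
  filter_upwards [ae_tendsto_zero_of_summable_integral (fun m ω => sq_nonneg _) hfi hsum]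
    with ω hω
  refine tendsto_div_of_tendsto_div_pow hp0 (fun N => hu N ω) hL (fun N => hstep N ω) ?_
  have hsqrt := (Real.continuous_sqrt.tendsto 0).comp hω
  simp only [Real.sqrt_zero] at hsqrt
  refine hsqrt.congr fun m => ?_
  simp only [Function.comp_apply]
  exact Real.sqrt_sq (div_nonneg (hu _ ω) (by positivity))

end Moments

theorem integral_comp_eq_integral_sum_mul_of_condExp {Ω ι : Type*} [Fintype ι] [DecidableEq ι]
    [MeasurableSpace ι] [MeasurableSingletonClass ι] {m m0 : MeasurableSpace Ω}
    {μ : Measure Ω} [IsFiniteMeasure μ] (hm : m ≤ m0) {χ : Ω → ι} (hχ : Measurable χ)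
    {p : ι → Ω → ℝ} (hp : ∀ j, μ[fun ω => if χ ω = j then (1 : ℝ) else 0 | m] =ᵐ[μ] p j)
    {ψ : ι → Ω → ℝ} (hψ : ∀ j, StronglyMeasurable[m] (ψ j))
    (hψb : ∀ j, ∃ B, ∀ ω, |ψ j ω| ≤ B) :
    ∫ ω, ψ (χ ω) ω ∂μ = ∫ ω, ∑ j, ψ j ω * p j ω ∂μ := by
  choose B hB using hψb
  set I : ι → Ω → ℝ := fun j ω => if χ ω = j then 1 else 0
  have hI (j : ι) : Integrable (I j) μ :=
    Integrable.of_bound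
      (Measurable.ite (hχ (measurableSet_singleton j)) measurable_const
        measurable_const).aestronglyMeasurable 1
      (ae_of_all _ fun ω => by simp only [I]; split_ifs <;> simp)
  have hψ_bound (j : ι) : ∀ᵐ ω ∂μ, ‖ψ j ω‖ ≤ B j := ae_of_all _ (hB j)
  have hψ_meas (j : ι) : AEStronglyMeasurable (ψ j) μ :=
    ((hψ j).mono hm).aestronglyMeasurable
  have hψI (j : ι) : Integrable (fun ω => ψ j ω * I j ω) μ :=
    (hI j).bdd_mul (hψ_meas j) (hψ_bound j)
  have hψp (j : ι) : Integrable (fun ω => ψ j ω * p j ω) μ :=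
    (integrable_condExp.congr (hp j)).bdd_mul (hψ_meas j) (hψ_bound j)
  have hpull (j : ι) : ∫ ω, ψ j ω * I j ω ∂μ = ∫ ω, ψ j ω * p j ω ∂μ := by
    calc ∫ ω, ψ j ω * I j ω ∂μ = ∫ ω, μ[ψ j * I j | m] ω ∂μ := (integral_condExp hm).symm
      _ = ∫ ω, ψ j ω * p j ω ∂μ := by
          refine integral_congr_ae ?_
          filter_upwards [condExp_stronglyMeasurable_mul_of_bound hm (hψ j) (hI j) (B j)
            (hψ_bound j), hp j] with ω h1 h2
          rw [h1, Pi.mul_apply, h2]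
  calc ∫ ω, ψ (χ ω) ω ∂μ = ∫ ω, ∑ j, ψ j ω * I j ω ∂μ := by simp [I]
    _ = ∑ j, ∫ ω, ψ j ω * p j ω ∂μ := by
        rw [integral_finsetSum _ fun j _ => hψI j]
        exact sum_congr rfl fun j _ => hpull j
    _ = ∫ ω, ∑ j, ψ j ω * p j ω ∂μ := (integral_finsetSum _ fun j _ => hψp j).symm

theorem integral_norm_comp_sq_le {Ω ι E : Type*} [Fintype ι] [NormedAddCommGroup E]
    {m0 : MeasurableSpace Ω} {μ : Measure Ω} [IsProbabilityMeasure μ] (w : ι → E)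
    (χ : Ω → ι) : ∫ ω, ‖w (χ ω)‖ ^ 2 ∂μ ≤ ‖w‖ ^ 2 := by
  simpa using integral_mono_of_nonneg (ae_of_all μ fun ω => sq_nonneg ‖w (χ ω)‖)
    (integrable_const (‖w‖ ^ 2)) (ae_of_all _ fun ω =>
      pow_le_pow_left₀ (norm_nonneg _) (norm_le_pi_norm w (χ ω)) 2)

theorem Complex.two_mul_inner_add_mul_le (x y ν : ℂ) {ε : ℝ} (hε : 0 < ε) :
    2 * inner ℝ x (y + ν * x) ≤ (2 * ν.re + ε) * ‖x‖ ^ 2 + ‖y‖ ^ 2 / ε := by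
  have hself : inner ℝ x (ν * x) = ν.re * ‖x‖ ^ 2 := by
    rw [Complex.inner, mul_assoc, Complex.mul_conj, Complex.normSq_eq_norm_sq,
      Complex.re_mul_ofReal]
  have hyoung : ε * ‖x‖ ^ 2 + ‖y‖ ^ 2 / ε - 2 * (‖x‖ * ‖y‖) = (ε * ‖x‖ - ‖y‖) ^ 2 / ε := by
    field_simp
    ring
  rw [inner_add_right, hself]
  linarith [real_inner_le_norm x y, div_nonneg (sq_nonneg (ε * ‖x‖ - ‖y‖)) hε.le]

section Urn

variable {ι Ω : Type*} [Fintype ι] {m0 : MeasurableSpace Ω}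

structure IsUrnProcess_s16 [DecidableEq ι] [MeasurableSpace ι] (Q : Matrix ι ι ℝ) (μ : Measure Ω)
    (ℱ : Filtration ℕ m0) (χ : ℕ → Ω → ι) (C : ℕ → Ω → ι → ℝ) : Prop where
  exists_eq_initial : ∃ C₀, ∀ ω, C 0 ω = C₀
  succ : ∀ N ω i, C (N + 1) ω i = C N ω i + Q (χ (N + 1) ω) i
  measurable_draw : ∀ N, Measurable[ℱ N] (χ N)
  adapted : ∀ N, Measurable[ℱ N] (C N)
  condExp_draw : ∀ N i, μ[fun ω => if χ (N + 1) ω = i then (1 : ℝ) else 0 | ℱ N]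
    =ᵐ[μ] fun ω => C N ω i / ((N : ℝ) + 1)

/-- The paper's `C_N v` for a complex column vector `v`. -/
def urnProj (C : ℕ → Ω → ι → ℝ) (v : ι → ℂ) (N : ℕ) (ω : Ω) : ℂ :=
  ∑ j, (C N ω j : ℂ) * v j

theorem urnProj_add_smul (C : ℕ → Ω → ι → ℝ) (u v : ι → ℂ) (ν : ℂ)
    (N : ℕ) (ω : Ω) : urnProj C (u + ν • v) N ω = urnProj C u N ω + ν * urnProj C v N ω := by
  simp [urnProj, mul_add, sum_add_distrib, mul_sum, mul_left_comm]

namespace IsUrnProcess_s16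

variable [DecidableEq ι] [MeasurableSpace ι] {Q : Matrix ι ι ℝ} {μ : Measure Ω}
  {ℱ : Filtration ℕ m0} {χ : ℕ → Ω → ι} {C : ℕ → Ω → ι → ℝ}

theorem urnProj_succ (h : IsUrnProcess_s16 Q μ ℱ χ C) (v : ι → ℂ) (N : ℕ) (ω : Ω) :
    urnProj C v (N + 1) ω
      = urnProj C v N ω + (Q.map (Complex.ofReal ·) *ᵥ v) (χ (N + 1) ω) := by
  simp [urnProj, h.succ, Matrix.mulVec, dotProduct, add_mul, sum_add_distrib]

theorem norm_urnProj_succ_le (h : IsUrnProcess_s16 Q μ ℱ χ C) (v : ι → ℂ) (N : ℕ) (ω : Ω) :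
    ‖urnProj C v (N + 1) ω‖
      ≤ ‖urnProj C v N ω‖ + ‖Q.map (Complex.ofReal ·) *ᵥ v‖ := by
  rw [h.urnProj_succ]
  exact (norm_add_le _ _).trans (by gcongr; exact norm_le_pi_norm _ _)

theorem exists_norm_urnProj_le (h : IsUrnProcess_s16 Q μ ℱ χ C) (v : ι → ℂ) (N : ℕ) :
    ∃ B, ∀ ω, ‖urnProj C v N ω‖ ≤ B := by
  induction N with
  | zero =>
    obtain ⟨C₀, hC₀⟩ := h.exists_eq_initial
    exact ⟨‖∑ j, (C₀ j : ℂ) * v j‖, fun ω => by simp [urnProj, hC₀]⟩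
  | succ N ih =>
    obtain ⟨B, hB⟩ := ih
    exact ⟨B + ‖Q.map (Complex.ofReal ·) *ᵥ v‖, fun ω =>
      (h.norm_urnProj_succ_le v N ω).trans (by gcongr; exact hB ω)⟩

theorem measurable_urnProj (h : IsUrnProcess_s16 Q μ ℱ χ C) (v : ι → ℂ) (N : ℕ) :
    Measurable[ℱ N] (urnProj C v N) :=
  Finset.measurable_sum _ fun j _ =>
    (Complex.measurable_ofReal.comp ((measurable_pi_apply j).comp (h.adapted N))).mul_const _

theorem integrable_norm_urnProj_sq [IsFiniteMeasure μ] (h : IsUrnProcess_s16 Q μ ℱ χ C)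
    (v : ι → ℂ) (N : ℕ) : Integrable (fun ω => ‖urnProj C v N ω‖ ^ 2) μ := by
  obtain ⟨B, hB⟩ := h.exists_norm_urnProj_le v N
  refine Integrable.of_bound
    (((h.measurable_urnProj v N).mono (ℱ.le N) le_rfl).norm.pow_const 2).aestronglyMeasurable
    (B ^ 2) (ae_of_all _ fun ω => ?_)
  rw [Real.norm_eq_abs, abs_pow, abs_norm]
  exact pow_le_pow_left₀ (norm_nonneg _) (hB ω) 2

theorem integrable_inner_urnProj [IsFiniteMeasure μ] (h : IsUrnProcess_s16 Q μ ℱ χ C)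
    (v w : ι → ℂ) (N : ℕ) :
    Integrable (fun ω => inner ℝ (urnProj C v N ω) (urnProj C w N ω)) μ := by
  obtain ⟨B, hB⟩ := h.exists_norm_urnProj_le v N
  obtain ⟨B', hB'⟩ := h.exists_norm_urnProj_le w N
  have hX := (h.measurable_urnProj v N).mono (ℱ.le N) le_rfl
  have hY := (h.measurable_urnProj w N).mono (ℱ.le N) le_rfl
  exact Integrable.of_bound (hX.inner hY).aestronglyMeasurable (B * B') (ae_of_all _ fun ω =>
    (abs_real_inner_le_norm _ _).trans
      (mul_le_mul (hB ω) (hB' ω) (norm_nonneg _) ((norm_nonneg _).trans (hB ω))))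

variable [MeasurableSingletonClass ι]

theorem measurable_apply_draw (h : IsUrnProcess_s16 Q μ ℱ χ C) (w : ι → ℂ) (N : ℕ) :
    Measurable fun ω => w (χ N ω) :=
  (measurable_of_countable w).comp ((h.measurable_draw N).mono (ℱ.le N) le_rfl)

theorem integral_inner_apply_draw [IsFiniteMeasure μ] (h : IsUrnProcess_s16 Q μ ℱ χ C) {N : ℕ}
    {φ : Ω → ℂ} (hφ : Measurable[ℱ N] φ) (hφb : ∃ B, ∀ ω, ‖φ ω‖ ≤ B) (w : ι → ℂ) :
    ∫ ω, inner ℝ (φ ω) (w (χ (N + 1) ω)) ∂μ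
      = (∫ ω, inner ℝ (φ ω) (urnProj C w N ω) ∂μ) / ((N : ℝ) + 1) := by
  obtain ⟨B, hB⟩ := hφb
  rw [integral_comp_eq_integral_sum_mul_of_condExp (ℱ.le N)
    ((h.measurable_draw (N + 1)).mono (ℱ.le _) le_rfl) (h.condExp_draw N)
    (ψ := fun j ω => inner ℝ (φ ω) (w j))
    (fun j => (hφ.inner measurable_const).stronglyMeasurable)
    (fun j => ⟨B * ‖w j‖, fun ω => (abs_real_inner_le_norm _ _).trans (by gcongr; exact hB ω)⟩),
    ← integral_div]
  congr 1 with ω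
  simp only [urnProj, ← Complex.real_smul, inner_sum, real_inner_smul_right, sum_div]
  exact sum_congr rfl fun j _ => by ring

theorem integral_norm_sq_urnProj_succ [IsFiniteMeasure μ] (h : IsUrnProcess_s16 Q μ ℱ χ C)
    (v : ι → ℂ) (N : ℕ) :
    ∫ ω, ‖urnProj C v (N + 1) ω‖ ^ 2 ∂μ
      = ∫ ω, ‖urnProj C v N ω‖ ^ 2 ∂μ
        + 2 * (∫ ω, inner ℝ (urnProj C v N ω) (urnProj C (Q.map (Complex.ofReal ·) *ᵥ v) N ω) ∂μ)
          / ((N : ℝ) + 1)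
        + ∫ ω, ‖(Q.map (Complex.ofReal ·) *ᵥ v) (χ (N + 1) ω)‖ ^ 2 ∂μ := by
  set w := Q.map (Complex.ofReal ·) *ᵥ v
  obtain ⟨B, hB⟩ := h.exists_norm_urnProj_le v N
  have hX := (h.measurable_urnProj v N).mono (ℱ.le N) le_rfl
  have hw := h.measurable_apply_draw w (N + 1)
  have hX2 := h.integrable_norm_urnProj_sq v N
  have hcross : Integrable (fun ω => 2 * inner ℝ (urnProj C v N ω) (w (χ (N + 1) ω))) μ :=
    (Integrable.of_bound (hX.inner hw).aestronglyMeasurable (B * ‖w‖) (ae_of_all _ fun ω =>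
      (abs_real_inner_le_norm _ _).trans (mul_le_mul (hB ω) (norm_le_pi_norm w _)
        (norm_nonneg _) ((norm_nonneg _).trans (hB ω))))).const_mul 2
  have hjump : Integrable (fun ω => ‖w (χ (N + 1) ω)‖ ^ 2) μ :=
    Integrable.of_bound (hw.norm.pow_const 2).aestronglyMeasurable (‖w‖ ^ 2)
      (ae_of_all _ fun ω => by
        rw [Real.norm_eq_abs, abs_pow, abs_norm]
        exact pow_le_pow_left₀ (norm_nonneg _) (norm_le_pi_norm w _) 2)
  have hsum : Integrable (fun ω => ‖urnProj C v N ω‖ ^ 2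
      + 2 * inner ℝ (urnProj C v N ω) (w (χ (N + 1) ω))) μ := hX2.add hcross
  calc ∫ ω, ‖urnProj C v (N + 1) ω‖ ^ 2 ∂μ
      = ∫ ω, ‖urnProj C v N ω‖ ^ 2 + 2 * inner ℝ (urnProj C v N ω) (w (χ (N + 1) ω))
          + ‖w (χ (N + 1) ω)‖ ^ 2 ∂μ := by
        simp_rw [h.urnProj_succ, norm_add_sq_real]
        rfl
    _ = _ := by
        rw [integral_add hsum hjump, integral_add hX2 hcross, integral_const_mul,
          h.integral_inner_apply_draw (h.measurable_urnProj v N) ⟨B, hB⟩, mul_div_assoc]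

theorem integral_norm_sq_urnProj_succ_le [IsProbabilityMeasure μ] (h : IsUrnProcess_s16 Q μ ℱ χ C)
    {u v : ι → ℂ} {ν : ℂ} (hv : Q.map (Complex.ofReal ·) *ᵥ v = u + ν • v) {ε : ℝ} (hε : 0 < ε)
    (N : ℕ) :
    ∫ ω, ‖urnProj C v (N + 1) ω‖ ^ 2 ∂μ
      ≤ (1 + (2 * ν.re + ε) / ((N : ℝ) + 1)) * ∫ ω, ‖urnProj C v N ω‖ ^ 2 ∂μ
        + (∫ ω, ‖urnProj C u N ω‖ ^ 2 ∂μ) / (ε * ((N : ℝ) + 1))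
        + ‖Q.map (Complex.ofReal ·) *ᵥ v‖ ^ 2 := by
  set A := ∫ ω, ‖urnProj C v N ω‖ ^ 2 ∂μ
  set A' := ∫ ω, ‖urnProj C u N ω‖ ^ 2 ∂μ
  have hcross :
      2 * ∫ ω, inner ℝ (urnProj C v N ω) (urnProj C (Q.map (Complex.ofReal ·) *ᵥ v) N ω) ∂μ
        ≤ (2 * ν.re + ε) * A + A' / ε := by
    rw [← integral_const_mul]
    calc ∫ ω, 2 * inner ℝ (urnProj C v N ω) (urnProj C (Q.map (Complex.ofReal ·) *ᵥ v) N ω) ∂μ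
        ≤ ∫ ω, (2 * ν.re + ε) * ‖urnProj C v N ω‖ ^ 2 + ‖urnProj C u N ω‖ ^ 2 / ε ∂μ := by
          refine integral_mono ((h.integrable_inner_urnProj _ _ N).const_mul 2)
            (((h.integrable_norm_urnProj_sq v N).const_mul _).add
              ((h.integrable_norm_urnProj_sq u N).div_const ε)) fun ω => ?_
          simpa [hv, urnProj_add_smul] using
            Complex.two_mul_inner_add_mul_le (urnProj C v N ω) (urnProj C u N ω) ν hε
      _ = (2 * ν.re + ε) * A + A' / ε := by
          rw [integral_add ((h.integrable_norm_urnProj_sq v N).const_mul _)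
            ((h.integrable_norm_urnProj_sq u N).div_const ε), integral_const_mul, integral_div]
  have hN : (0 : ℝ) < (N : ℝ) + 1 := by positivity
  have hcross' := div_le_div_of_nonneg_right hcross hN.le
  have hsplit : ((2 * ν.re + ε) * A + A' / ε) / ((N : ℝ) + 1)
      = (2 * ν.re + ε) / ((N : ℝ) + 1) * A + A' / (ε * ((N : ℝ) + 1)) := by
    field_simp
  rw [h.integral_norm_sq_urnProj_succ]
  linarith [integral_norm_comp_sq_le (μ := μ) (Q.map (Complex.ofReal ·) *ᵥ v) (χ (N + 1))]

theorem exists_integral_norm_sq_urnProj_le [IsProbabilityMeasure μ]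
    (h : IsUrnProcess_s16 Q μ ℱ χ C) {ν : ℂ} {ξ : ℕ → ι → ℂ} {t : ℕ} (hξ0 : ξ 0 = 0)
    (hchain : ∀ i, 1 ≤ i → i ≤ t → Q.map (Complex.ofReal ·) *ᵥ ξ i = ξ (i - 1) + ν • ξ i)
    {γ : ℝ} (hνγ : ν.re < γ) (hγ : 1 / 2 ≤ γ) :
    ∀ i ≤ t, ∃ K, ∀ N : ℕ, ∫ ω, ‖urnProj C (ξ i) N ω‖ ^ 2 ∂μ ≤ K * ((N : ℝ) + 1) ^ (2 * γ) := by
  intro i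
  induction i with
  | zero => exact fun _ => ⟨0, fun N => by simp [hξ0, urnProj]⟩
  | succ i ih =>
    intro hi
    obtain ⟨K, hK⟩ := ih (by omega)
    set r := max ν.re 0
    -- Young's inequality with `ε = γ - r` leaves the drift `2 Re ν + ε ≤ 2ρ`, `ρ = (r + γ) / 2 < γ`
    have hε : 0 < γ - r := sub_pos.2 (max_lt hνγ (by linarith))
    refine exists_le_mul_rpow_of_le_one_add_div_mul_add (ρ := (r + γ) / 2)
      (c := K / (γ - r) + ‖Q.map (Complex.ofReal ·) *ᵥ ξ (i + 1)‖ ^ 2)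
      (by positivity) (by linarith) (by linarith) fun N => ?_
    have hN : (0 : ℝ) < (N : ℝ) + 1 := by positivity
    have hstep := h.integral_norm_sq_urnProj_succ_le (hchain (i + 1) (by omega) hi) hε N
    rw [Nat.add_sub_cancel] at hstep
    have hdrift :
        (1 + (2 * ν.re + (γ - r)) / ((N : ℝ) + 1)) * ∫ ω, ‖urnProj C (ξ (i + 1)) N ω‖ ^ 2 ∂μ
          ≤ (1 + 2 * ((r + γ) / 2) / ((N : ℝ) + 1))
            * ∫ ω, ‖urnProj C (ξ (i + 1)) N ω‖ ^ 2 ∂μ := by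
      gcongr
      linarith [le_max_left ν.re 0]
    have hprev : (∫ ω, ‖urnProj C (ξ i) N ω‖ ^ 2 ∂μ) / ((γ - r) * ((N : ℝ) + 1))
        ≤ K / (γ - r) * ((N : ℝ) + 1) ^ (2 * γ - 1) := by
      rw [Real.rpow_sub hN, Real.rpow_one, div_le_iff₀ (by positivity)]
      calc ∫ ω, ‖urnProj C (ξ i) N ω‖ ^ 2 ∂μ ≤ K * ((N : ℝ) + 1) ^ (2 * γ) := hK N
        _ = _ := by field_simp
    have hjump : ‖Q.map (Complex.ofReal ·) *ᵥ ξ (i + 1)‖ ^ 2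
        ≤ ‖Q.map (Complex.ofReal ·) *ᵥ ξ (i + 1)‖ ^ 2 * ((N : ℝ) + 1) ^ (2 * γ - 1) :=
      le_mul_of_one_le_right (sq_nonneg _) (Real.one_le_rpow (by linarith) (by linarith))
    linarith

end IsUrnProcess_s16

end Urn

theorem urn_jordan_directions_vanish_general
    (D : ℕ) (Q1 : Matrix (Fin D) (Fin D) ℝ)
    (hpos : ∀ i j, 0 ≤ Q1 i j) (hrow : ∀ i, ∑ j, Q1 i j = 1)
    (μ1 : ℝ)
    (hμ1mem : (μ1 : ℂ) ∈ spectrum ℂ (Q1.map (Complex.ofReal ·)))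
    (hμ1top : ∀ z ∈ spectrum ℂ (Q1.map (Complex.ofReal ·)), ‖z‖ ≤ μ1)
    (ν : ℂ)
    (hνre : ν.re < μ1)
    (t : ℕ)
    (ξ : ℕ → Fin D → ℂ) (hξ0 : ξ 0 = 0)
    (hchain : ∀ i : ℕ, 1 ≤ i → i ≤ t →
      (Q1.map (Complex.ofReal ·)).mulVec (ξ i) = ξ (i - 1) + ν • ξ i)
    -- urn dynamics
    {Ω : Type*} {m0 : MeasurableSpace Ω} (μpr : MeasureTheory.Measure Ω)
    [MeasureTheory.IsProbabilityMeasure μpr]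
    (ℱ : MeasureTheory.Filtration ℕ m0)
    (χ : ℕ → Ω → Fin D)
    (hχmeas : ∀ N, Measurable[ℱ N] (χ N))
    (C : ℕ → Ω → Fin D → ℝ) (C0 : Fin D → ℝ)
    (hCinit : ∀ ω, C 0 ω = C0)
    (hCrec : ∀ N ω i, C (N + 1) ω i = C N ω i + Q1 (χ (N + 1) ω) i)
    (hCmeas : ∀ N, Measurable[ℱ N] (C N))
    (hdraw : ∀ N (i : Fin D),
      μpr[(fun ω => if χ (N + 1) ω = i then (1 : ℝ) else 0)|ℱ N]
        =ᵐ[μpr] fun ω => C N ω i / ((N : ℝ) + 1)) :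
    ∀ i : ℕ, 1 ≤ i → i ≤ t →
      (∀ᵐ ω ∂μpr, Tendsto
        (fun N : ℕ => (∑ jj, (C N ω jj : ℂ) * ξ i jj) / (N : ℂ) ^ (μ1 : ℂ))
        atTop (nhds 0)) ∧
      Tendsto (fun N : ℕ =>
          ∫ ω, ‖(∑ jj, (C N ω jj : ℂ) * ξ i jj) / (N : ℂ) ^ (μ1 : ℂ)‖ ^ 2 ∂μpr)
        atTop (nhds 0) := by
  obtain rfl : μ1 = 1 := eq_one_of_mem_spectrum_of_forall_norm_le hpos hrow hμ1mem hμ1top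
  have hurn : IsUrnProcess_s16 Q1 μpr ℱ χ C := ⟨⟨C0, hCinit⟩, hCrec, hχmeas, hCmeas, hdraw⟩
  obtain ⟨γ, hγ, hγ1⟩ := exists_between (max_lt hνre one_half_lt_one)
  intro i _ hit
  obtain ⟨K, hK⟩ := hurn.exists_integral_norm_sq_urnProj_le hξ0 hchain
    ((le_max_left _ _).trans_lt hγ) ((le_max_right _ _).trans hγ.le) i hit
  have hnorm (N : ℕ) (ω : Ω) :
      ‖(∑ jj, (C N ω jj : ℂ) * ξ i jj) / (N : ℂ) ^ ((1 : ℝ) : ℂ)‖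
        = ‖urnProj C (ξ i) N ω‖ / N := by
    rw [Complex.ofReal_one, Complex.cpow_one, norm_div, Complex.norm_natCast]
    rfl
  simp_rw [tendsto_zero_iff_norm_tendsto_zero (f := fun N : ℕ => _ / _), hnorm]
  exact ⟨ae_tendsto_div_of_integral_sq_le hγ1 (fun N ω => norm_nonneg _) (norm_nonneg _)
      (hurn.norm_urnProj_succ_le (ξ i)) (hurn.integrable_norm_urnProj_sq (ξ i)) hK,
    tendsto_integral_sq_div_of_integral_sq_le hγ1 hK⟩

/-- Urn model with an irreducible balanced nonnegative replacement matrix `Q₁` as the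
only block, with Perron–Frobenius eigenvalue `μ₁ > 0`.  If `ν ≠ μ₁` is another
eigenvalue (so `Re ν < μ₁`) with Jordan chain `ξ_1, …, ξ_t` (`ξ_0 = 0`,
`Q₁ ξ_i = ξ_{i-1} + ν ξ_i`), then `C_N ξ_i / N^{μ₁} → 0` almost surely and in `L²`
for each `i = 1, …, t`. -/
theorem urn_jordan_directions_vanish
    (D : ℕ) (Q1 : Matrix (Fin D) (Fin D) ℝ)
    (hpos : ∀ i j, 0 ≤ Q1 i j) (hrow : ∀ i, ∑ j, Q1 i j = 1)
    (hirr : ∀ i j : Fin D, ∃ n : ℕ, 0 < n ∧ 0 < (Q1 ^ n) i j)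
    (μ1 : ℝ) (hμ1pos : 0 < μ1)
    (hμ1mem : (μ1 : ℂ) ∈ spectrum ℂ (Q1.map (Complex.ofReal ·)))
    (hμ1top : ∀ z ∈ spectrum ℂ (Q1.map (Complex.ofReal ·)), ‖z‖ ≤ μ1)
    (ν : ℂ) (hνmem : ν ∈ spectrum ℂ (Q1.map (Complex.ofReal ·)))
    (hνne : ν ≠ (μ1 : ℂ)) (hνre : ν.re < μ1)
    (t : ℕ) (ht : 1 ≤ t)
    (ξ : ℕ → Fin D → ℂ) (hξ0 : ξ 0 = 0)
    (hchain : ∀ i : ℕ, 1 ≤ i → i ≤ t →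
      (Q1.map (Complex.ofReal ·)).mulVec (ξ i) = ξ (i - 1) + ν • ξ i)
    -- urn dynamics
    {Ω : Type*} {m0 : MeasurableSpace Ω} (μpr : MeasureTheory.Measure Ω)
    [MeasureTheory.IsProbabilityMeasure μpr]
    (ℱ : MeasureTheory.Filtration ℕ m0)
    (χ : ℕ → Ω → Fin D)
    (hχmeas : ∀ N, Measurable[ℱ N] (χ N))
    (C : ℕ → Ω → Fin D → ℝ) (C0 : Fin D → ℝ)
    (hC0pos : ∀ i, 0 < C0 i) (hC0sum : ∑ i, C0 i = 1)
    (hCinit : ∀ ω, C 0 ω = C0)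
    (hCrec : ∀ N ω i, C (N + 1) ω i = C N ω i + Q1 (χ (N + 1) ω) i)
    (hCmeas : ∀ N, Measurable[ℱ N] (C N))
    (hdraw : ∀ N (i : Fin D),
      μpr[(fun ω => if χ (N + 1) ω = i then (1 : ℝ) else 0)|ℱ N]
        =ᵐ[μpr] fun ω => C N ω i / ((N : ℝ) + 1)) :
    ∀ i : ℕ, 1 ≤ i → i ≤ t →
      (∀ᵐ ω ∂μpr, Tendsto
        (fun N : ℕ => (∑ jj, (C N ω jj : ℂ) * ξ i jj) / (N : ℂ) ^ (μ1 : ℂ))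
        atTop (nhds 0)) ∧
      Tendsto (fun N : ℕ =>
          ∫ ω, ‖(∑ jj, (C N ω jj : ℂ) * ξ i jj) / (N : ℂ) ^ (μ1 : ℂ)‖ ^ 2 ∂μpr)
        atTop (nhds 0) :=
  urn_jordan_directions_vanish_general D Q1 hpos hrow μ1 hμ1mem hμ1top ν hνre t ξ hξ0 hchain μpr ℱ χ
    hχmeas C C0 hCinit hCrec hCmeas hdraw
end
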